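/- arXiv:0708.0948 — 7 statements merged into one kernel-verified Lean document; each statement's English description precedes it below -/
import Mathlib

section
/- Let ρ be a convex risk measure on X with ρ(0) = 0, and for Ψ ∈ X define the marginal risk measure ρ_∞(Ψ) = inf_{γ>0} γ·ρ(Ψ/γ). Then: (i) if m ≤ Ψ ≤ M pointwise for reals m, M, then −M ≤ ρ_∞(Ψ) ≤ −m, so ρ_∞ is real-valued; (ii) ρ_∞ is a coherent risk measure: it is convex, monotone, cash translation invariant, and positively homogeneous (ρ_∞(λΨ) = λ·ρ_∞(Ψ) for all λ ≥ 0); (iii) if ρ is continuous from below, then ρ_∞ is continuous from below. -/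
/-!
For `γ > 0` the perspective `Ψ ↦ γ ρ(Ψ/γ)` is again a convex risk measure vanishing at `0`, and
by convexity of `ρ` together with `ρ 0 = 0` it is non-increasing in `γ`. Hence `ρ_∞` is the
pointwise limit of these perspectives as `γ → ∞`; the bounds and the axioms of a convex risk
measure are closed conditions and pass to the limit. Positive homogeneity comes from reindexing
the infimum, since `γ ρ(λΨ/γ) = λ (γ/λ) ρ(Ψ/(γ/λ))`. Finally, an infimum of monotone functionals
that are continuous from below is continuous from below, and each perspective of `ρ` inherits
continuity from below.
-/

open BoundedContinuousFunction Filter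

/-- A (monetary) convex risk measure on the space `Ω →ᵇ ℝ` of bounded functions on `Ω`. -/
def IsConvexRiskMeasure {Ω : Type*} [TopologicalSpace Ω] (ρ : (Ω →ᵇ ℝ) → ℝ) : Prop :=
  (∀ (Φ Ψ : Ω →ᵇ ℝ) (l : ℝ), 0 ≤ l → l ≤ 1 →
      ρ (l • Φ + (1 - l) • Ψ) ≤ l * ρ Φ + (1 - l) * ρ Ψ) ∧
  (∀ Φ Ψ : Ω →ᵇ ℝ, (∀ ω, Φ ω ≤ Ψ ω) → ρ Ψ ≤ ρ Φ) ∧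
  (∀ (Φ : Ω →ᵇ ℝ) (m : ℝ), ρ (Φ + BoundedContinuousFunction.const Ω m) = ρ Φ - m)

/-- Continuity from below: for every pointwise non-decreasing sequence converging
pointwise, the values of `ρ` converge. -/
def ContinuousFromBelow {Ω : Type*} [TopologicalSpace Ω] (ρ : (Ω →ᵇ ℝ) → ℝ) : Prop :=
  ∀ (Ψn : ℕ → (Ω →ᵇ ℝ)) (Ψ : Ω →ᵇ ℝ),
    (∀ n ω, Ψn n ω ≤ Ψn (n + 1) ω) →
    (∀ ω, Tendsto (fun n => Ψn n ω) atTop (nhds (Ψ ω))) →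
    Tendsto (fun n => ρ (Ψn n)) atTop (nhds (ρ Ψ))

/-- The marginal risk measure `ρ_∞(Ψ) = inf_{γ > 0} γ ρ(Ψ/γ)`. -/
noncomputable def marginalRM {Ω : Type*} [TopologicalSpace Ω]
    (ρ : (Ω →ᵇ ℝ) → ℝ) (Ψ : Ω →ᵇ ℝ) : ℝ :=
  ⨅ γ : {g : ℝ // 0 < g}, (γ : ℝ) * ρ (((γ : ℝ))⁻¹ • Ψ)


open Set Topology

section

variable {Ω : Type*} [TopologicalSpace Ω] {ρ : (Ω →ᵇ ℝ) → ℝ}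

namespace IsConvexRiskMeasure

lemma map_add_const (hρ : IsConvexRiskMeasure ρ) (Φ : Ω →ᵇ ℝ) (m : ℝ) :
    ρ (Φ + const Ω m) = ρ Φ - m :=
  hρ.2.2 Φ m

lemma anti (hρ : IsConvexRiskMeasure ρ) {Φ Ψ : Ω →ᵇ ℝ} (h : ∀ ω, Φ ω ≤ Ψ ω) :
    ρ Ψ ≤ ρ Φ :=
  hρ.2.1 Φ Ψ h

lemma map_const (hρ : IsConvexRiskMeasure ρ) (h0 : ρ 0 = 0) (c : ℝ) : ρ (const Ω c) = -c := by
  simpa [h0] using hρ.map_add_const 0 c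

lemma map_smul_le (hρ : IsConvexRiskMeasure ρ) (h0 : ρ 0 = 0) {t : ℝ} (ht0 : 0 ≤ t)
    (ht1 : t ≤ 1) (Φ : Ω →ᵇ ℝ) : ρ (t • Φ) ≤ t * ρ Φ := by
  simpa [h0] using hρ.1 Φ 0 t ht0 ht1

lemma mem_Icc (hρ : IsConvexRiskMeasure ρ) (h0 : ρ 0 = 0) {Ψ : Ω →ᵇ ℝ} {m M : ℝ}
    (hm : ∀ ω, m ≤ Ψ ω) (hM : ∀ ω, Ψ ω ≤ M) : ρ Ψ ∈ Icc (-M) (-m) := by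
  constructor
  · simpa [hρ.map_const h0] using hρ.anti (Φ := Ψ) (Ψ := const Ω M) hM
  · simpa [hρ.map_const h0] using hρ.anti (Φ := const Ω m) (Ψ := Ψ) hm

lemma neg_norm_le (hρ : IsConvexRiskMeasure ρ) (h0 : ρ 0 = 0) (Ψ : Ω →ᵇ ℝ) : -‖Ψ‖ ≤ ρ Ψ :=
  (hρ.mem_Icc h0 (fun ω => neg_norm_le_apply Ψ ω) (Ψ.apply_le_norm)).1

lemma of_tendsto {ι : Type*} {l : Filter ι} [l.NeBot] {ρs : ι → (Ω →ᵇ ℝ) → ℝ}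
    (hρs : ∀ i, IsConvexRiskMeasure (ρs i))
    (hlim : ∀ Ψ, Tendsto (fun i => ρs i Ψ) l (𝓝 (ρ Ψ))) : IsConvexRiskMeasure ρ := by
  refine ⟨fun Φ Ψ t ht0 ht1 => ?_, fun Φ Ψ h => ?_, fun Φ m => ?_⟩
  · exact le_of_tendsto_of_tendsto (hlim _)
      (((hlim Φ).const_mul t).add ((hlim Ψ).const_mul (1 - t)))
      (Eventually.of_forall fun i => (hρs i).1 Φ Ψ t ht0 ht1)
  · exact le_of_tendsto_of_tendsto (hlim Ψ) (hlim Φ)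
      (Eventually.of_forall fun i => (hρs i).anti h)
  · refine tendsto_nhds_unique (hlim _) ?_
    simpa only [(hρs _).map_add_const] using (hlim Φ).sub_const m

end IsConvexRiskMeasure

noncomputable def perspective (ρ : (Ω →ᵇ ℝ) → ℝ) (γ : ℝ) (Ψ : Ω →ᵇ ℝ) : ℝ :=
  γ * ρ (γ⁻¹ • Ψ)

lemma marginalRM_eq_iInf_perspective (ρ : (Ω →ᵇ ℝ) → ℝ) (Ψ : Ω →ᵇ ℝ) :
    marginalRM ρ Ψ = ⨅ γ : {g : ℝ // 0 < g}, perspective ρ γ Ψ :=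
  rfl

lemma perspective_map_zero (h0 : ρ 0 = 0) (γ : ℝ) : perspective ρ γ 0 = 0 := by
  simp [perspective, h0]

lemma perspective_smul {l : ℝ} (hl : l ≠ 0) (γ : ℝ) (Ψ : Ω →ᵇ ℝ) :
    perspective ρ γ (l • Ψ) = l * perspective ρ (γ / l) Ψ := by
  simp only [perspective, smul_smul, div_eq_inv_mul]
  field_simp

lemma isConvexRiskMeasure_perspective (hρ : IsConvexRiskMeasure ρ) {γ : ℝ} (hγ : 0 < γ) :
    IsConvexRiskMeasure (perspective ρ γ) := by
  refine ⟨fun Φ Ψ t ht0 ht1 => ?_, fun Φ Ψ h => ?_, fun Φ m => ?_⟩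
  · have hconv := mul_le_mul_of_nonneg_left (hρ.1 (γ⁻¹ • Φ) (γ⁻¹ • Ψ) t ht0 ht1) hγ.le
    simp only [perspective, smul_add, smul_comm γ⁻¹ t, smul_comm γ⁻¹ (1 - t)]
    linarith
  · refine mul_le_mul_of_nonneg_left (hρ.anti fun ω => ?_) hγ.le
    simpa using mul_le_mul_of_nonneg_left (h ω) (inv_nonneg.2 hγ.le)
  · have hsmul : γ⁻¹ • (Φ + const Ω m) = γ⁻¹ • Φ + const Ω (γ⁻¹ * m) := by
      ext ω
      simp
    simp only [perspective, hsmul, hρ.map_add_const]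
    field_simp

/-- Convexity and `ρ 0 = 0` give `ρ(Ψ/γ') ≤ (γ/γ') ρ(Ψ/γ)` for `γ ≤ γ'`. -/
lemma IsConvexRiskMeasure.perspective_anti (hρ : IsConvexRiskMeasure ρ) (h0 : ρ 0 = 0)
    (Ψ : Ω →ᵇ ℝ) {γ γ' : ℝ} (hγ : 0 < γ) (h : γ ≤ γ') :
    perspective ρ γ' Ψ ≤ perspective ρ γ Ψ := by
  have hγ' : 0 < γ' := hγ.trans_le h
  have hscale : γ'⁻¹ • Ψ = (γ / γ') • (γ⁻¹ • Ψ) := by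
    rw [smul_smul]
    congr 1
    field_simp
  have hle := mul_le_mul_of_nonneg_left
    (hρ.map_smul_le h0 (div_nonneg hγ.le hγ'.le) ((div_le_one hγ').2 h) (γ⁻¹ • Ψ)) hγ'.le
  calc perspective ρ γ' Ψ ≤ γ' * (γ / γ' * ρ (γ⁻¹ • Ψ)) := by rwa [perspective, hscale]
    _ = perspective ρ γ Ψ := by rw [perspective]; field_simp

lemma IsConvexRiskMeasure.bddBelow_perspective (hρ : IsConvexRiskMeasure ρ) (h0 : ρ 0 = 0)
    (Ψ : Ω →ᵇ ℝ) : BddBelow (range fun γ : {g : ℝ // 0 < g} => perspective ρ γ Ψ) :=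
  ⟨-‖Ψ‖, by
    rintro _ ⟨γ, rfl⟩
    exact (isConvexRiskMeasure_perspective hρ γ.2).neg_norm_le (perspective_map_zero h0 γ) Ψ⟩

lemma IsConvexRiskMeasure.tendsto_perspective (hρ : IsConvexRiskMeasure ρ) (h0 : ρ 0 = 0)
    (Ψ : Ω →ᵇ ℝ) :
    Tendsto (fun γ : {g : ℝ // 0 < g} => perspective ρ γ Ψ) atTop (𝓝 (marginalRM ρ Ψ)) :=
  tendsto_atTop_ciInf (fun γ _ h => hρ.perspective_anti h0 Ψ γ.2 h)
    (hρ.bddBelow_perspective h0 Ψ)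

lemma IsConvexRiskMeasure.marginalRM_mem_Icc (hρ : IsConvexRiskMeasure ρ) (h0 : ρ 0 = 0)
    {Ψ : Ω →ᵇ ℝ} {m M : ℝ} (hm : ∀ ω, m ≤ Ψ ω) (hM : ∀ ω, Ψ ω ≤ M) :
    marginalRM ρ Ψ ∈ Icc (-M) (-m) :=
  isClosed_Icc.mem_of_tendsto (hρ.tendsto_perspective h0 Ψ) <| Eventually.of_forall fun γ =>
    (isConvexRiskMeasure_perspective hρ γ.2).mem_Icc (perspective_map_zero h0 γ) hm hM

lemma isConvexRiskMeasure_marginalRM (hρ : IsConvexRiskMeasure ρ) (h0 : ρ 0 = 0) :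
    IsConvexRiskMeasure (marginalRM ρ) :=
  .of_tendsto (fun γ : {g : ℝ // 0 < g} => isConvexRiskMeasure_perspective hρ γ.2)
    (hρ.tendsto_perspective h0)

lemma marginalRM_smul (h0 : ρ 0 = 0) (Ψ : Ω →ᵇ ℝ) {l : ℝ} (hl : 0 ≤ l) :
    marginalRM ρ (l • Ψ) = l * marginalRM ρ Ψ := by
  rcases hl.eq_or_lt with rfl | hl
  · simp [marginalRM_eq_iInf_perspective, perspective_map_zero h0]
  have hdiv : Function.Surjective fun γ : {g : ℝ // 0 < g} =>
      (⟨γ / l, div_pos γ.2 hl⟩ : {g : ℝ // 0 < g}) :=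
    fun δ => ⟨⟨δ * l, mul_pos δ.2 hl⟩, Subtype.ext (mul_div_cancel_right₀ _ hl.ne')⟩
  simp only [marginalRM_eq_iInf_perspective, perspective_smul hl.ne',
    Real.mul_iInf_of_nonneg hl.le]
  exact hdiv.iInf_comp fun γ : {g : ℝ // 0 < g} => l * perspective ρ γ Ψ

lemma continuousFromBelow_perspective (hρ : ContinuousFromBelow ρ) {γ : ℝ} (hγ : 0 ≤ γ) :
    ContinuousFromBelow (perspective ρ γ) := fun Ψn Ψ hmono hlim =>
  (hρ (fun n => γ⁻¹ • Ψn n) (γ⁻¹ • Ψ)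
    (fun n ω => by simpa using mul_le_mul_of_nonneg_left (hmono n ω) (inv_nonneg.2 hγ))
    (fun ω => by simpa using (hlim ω).const_mul γ⁻¹)).const_mul γ

/-- The upper bound comes from continuity of a single member, the lower one from monotonicity. -/
lemma ContinuousFromBelow.iInf {ι : Type*} [Nonempty ι] {ρs : ι → (Ω →ᵇ ℝ) → ℝ}
    (hρs : ∀ i, ContinuousFromBelow (ρs i))
    (hanti : ∀ i Φ Ψ, (∀ ω, Φ ω ≤ Ψ ω) → ρs i Ψ ≤ ρs i Φ)
    (hbdd : ∀ Ψ, BddBelow (range fun i => ρs i Ψ)) :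
    ContinuousFromBelow fun Ψ => ⨅ i, ρs i Ψ := by
  intro Ψn Ψ hmono hlim
  have hle : ∀ n ω, Ψn n ω ≤ Ψ ω := fun n ω =>
    (monotone_nat_of_le_succ fun k => hmono k ω).ge_of_tendsto (hlim ω) n
  refine tendsto_order.2 ⟨fun a ha => Eventually.of_forall fun n => ?_, fun a ha => ?_⟩
  · exact ha.trans_le (ciInf_mono (hbdd _) fun i => hanti i _ _ (hle n))
  · obtain ⟨i, hi⟩ := exists_lt_of_ciInf_lt ha
    filter_upwards [(tendsto_order.1 (hρs i Ψn Ψ hmono hlim)).2 a hi] with n hn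
    exact (ciInf_le (hbdd _) i).trans_lt hn

lemma continuousFromBelow_marginalRM (hρ : IsConvexRiskMeasure ρ) (h0 : ρ 0 = 0)
    (hcont : ContinuousFromBelow ρ) : ContinuousFromBelow (marginalRM ρ) :=
  ContinuousFromBelow.iInf
    (fun γ : {g : ℝ // 0 < g} => continuousFromBelow_perspective hcont γ.2.le)
    (fun γ _ _ h => (isConvexRiskMeasure_perspective hρ γ.2).anti h)
    (hρ.bddBelow_perspective h0)

end

theorem stmt2_general {Ω : Type*} [TopologicalSpace Ω]
    (ρ : (Ω →ᵇ ℝ) → ℝ) (hρ : IsConvexRiskMeasure ρ) (h0 : ρ 0 = 0) :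
    (∀ (Ψ : Ω →ᵇ ℝ) (m M : ℝ), (∀ ω, m ≤ Ψ ω) → (∀ ω, Ψ ω ≤ M) →
        -M ≤ marginalRM ρ Ψ ∧ marginalRM ρ Ψ ≤ -m) ∧
    IsConvexRiskMeasure (marginalRM ρ) ∧
    (∀ (Ψ : Ω →ᵇ ℝ) (l : ℝ), 0 ≤ l → marginalRM ρ (l • Ψ) = l * marginalRM ρ Ψ) ∧
    (ContinuousFromBelow ρ → ContinuousFromBelow (marginalRM ρ)) :=
  ⟨fun _ _ _ hm hM => hρ.marginalRM_mem_Icc h0 hm hM, isConvexRiskMeasure_marginalRM hρ h0,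
    fun Ψ _ hl => marginalRM_smul h0 Ψ hl, continuousFromBelow_marginalRM hρ h0⟩

/-- If `ρ(0) = 0`, the marginal risk measure `ρ_∞` is real-valued with
`-M ≤ ρ_∞(Ψ) ≤ -m` whenever `m ≤ Ψ ≤ M`, it is a coherent risk measure
(convex, monotone, translation invariant, positively homogeneous), and it is
continuous from below whenever `ρ` is. -/
theorem stmt2 {Ω : Type*} [TopologicalSpace Ω] [DiscreteTopology Ω] [Nonempty Ω]
    (ρ : (Ω →ᵇ ℝ) → ℝ) (hρ : IsConvexRiskMeasure ρ) (h0 : ρ 0 = 0) :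
    (∀ (Ψ : Ω →ᵇ ℝ) (m M : ℝ), (∀ ω, m ≤ Ψ ω) → (∀ ω, Ψ ω ≤ M) →
        -M ≤ marginalRM ρ Ψ ∧ marginalRM ρ Ψ ≤ -m) ∧
    IsConvexRiskMeasure (marginalRM ρ) ∧
    (∀ (Ψ : Ω →ᵇ ℝ) (l : ℝ), 0 ≤ l → marginalRM ρ (l • Ψ) = l * marginalRM ρ Ψ) ∧
    (ContinuousFromBelow ρ → ContinuousFromBelow (marginalRM ρ)) :=
  stmt2_general ρ hρ h0
end

section
/- Let ρ be a convex risk measure on X. For every Ψ ∈ X and every γ > 0 one has γ·ρ(Ψ/γ) − γ·ρ(0) ≤ sup_{ω∈Ω}(−Ψ(ω)), so that the conservative risk measure ρ_{0⁺}(Ψ) = sup_{γ>0} (γ·ρ(Ψ/γ) − γ·ρ(0)) is real-valued (it is the non-decreasing limit of γ·ρ(Ψ/γ) − γ·ρ(0) as γ ↓ 0). Moreover ρ_{0⁺} is a coherent risk measure: it is convex, monotone, cash translation invariant, and positively homogeneous (ρ_{0⁺}(λΨ) = λ·ρ_{0⁺}(Ψ) for all λ ≥ 0). -/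
open BoundedContinuousFunction

/-- The conservative risk measure `ρ_{0⁺}(Ψ) = sup_{γ > 0} (γ ρ(Ψ/γ) - γ ρ(0))`. -/
noncomputable def conservativeRM {Ω : Type*} [TopologicalSpace Ω]
    (ρ : (Ω →ᵇ ℝ) → ℝ) (Ψ : Ω →ᵇ ℝ) : ℝ :=
  ⨆ γ : {g : ℝ // 0 < g}, ((γ : ℝ) * ρ (((γ : ℝ))⁻¹ • Ψ) - (γ : ℝ) * ρ 0)

/-!
For `γ > 0` the perspective `ρ_γ Ψ = γ ρ(Ψ/γ) - γ ρ(0)` is again a convex risk measure, and it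
vanishes at `0`; monotonicity and cash invariance then bound it by `sup (-Ψ)`, uniformly in `γ`.
A pointwise supremum of a nonempty, pointwise bounded family of convex risk measures is a convex
risk measure, which gives the convex risk measure `ρ_{0⁺} = sup_γ ρ_γ`. Positive homogeneity holds
because `ρ_γ (l Ψ) = l ρ_{γ/l} Ψ`, so scaling by `l > 0` only reparametrizes the supremum.
-/

open Set

section

variable {Ω : Type*} [TopologicalSpace Ω]

namespace IsConvexRiskMeasure

variable {ρ : (Ω →ᵇ ℝ) → ℝ}

theorem le_add_iSup_neg (hρ : IsConvexRiskMeasure ρ) (Ψ : Ω →ᵇ ℝ) :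
    ρ Ψ ≤ ρ 0 + ⨆ ω, -Ψ ω := by
  have hbdd : BddAbove (range fun ω => -Ψ ω) := (isBounded_range (-Ψ)).bddAbove
  have hconst : ρ Ψ ≤ ρ (const Ω (-⨆ ω, -Ψ ω)) :=
    hρ.2.1 _ _ fun ω => by
      have := le_ciSup hbdd ω
      simp only [const_apply]
      linarith
  have hcash := hρ.2.2 0 (-⨆ ω, -Ψ ω)
  rw [zero_add] at hcash
  linarith

theorem iSup {ι : Type*} [Nonempty ι] {ρ : ι → (Ω →ᵇ ℝ) → ℝ}
    (hρ : ∀ i, IsConvexRiskMeasure (ρ i)) (hbdd : ∀ Ψ, BddAbove (range fun i => ρ i Ψ)) :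
    IsConvexRiskMeasure fun Ψ => ⨆ i, ρ i Ψ := by
  refine ⟨fun Φ Ψ l hl₀ hl₁ => ciSup_le fun i => ?_, fun Φ Ψ h => ciSup_le fun i => ?_,
    fun Φ m => ?_⟩
  · have hΦ := mul_le_mul_of_nonneg_left (le_ciSup (hbdd Φ) i) hl₀
    have hΨ := mul_le_mul_of_nonneg_left (le_ciSup (hbdd Ψ) i) (sub_nonneg.mpr hl₁)
    linarith [(hρ i).1 Φ Ψ l hl₀ hl₁]
  · exact ((hρ i).2.1 Φ Ψ h).trans (le_ciSup (hbdd Φ) i)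
  · simp only [(hρ _).2.2]
    exact (ciSup_sub (hbdd Φ) m).symm

end IsConvexRiskMeasure

noncomputable def riskPerspective (ρ : (Ω →ᵇ ℝ) → ℝ) (γ : ℝ) (Ψ : Ω →ᵇ ℝ) : ℝ :=
  γ * ρ (γ⁻¹ • Ψ) - γ * ρ 0

variable {ρ : (Ω →ᵇ ℝ) → ℝ}

@[simp]
theorem riskPerspective_zero (γ : ℝ) : riskPerspective ρ γ 0 = 0 := by
  simp [riskPerspective]

theorem riskPerspective_smul {γ l : ℝ} (hl : l ≠ 0) (Ψ : Ω →ᵇ ℝ) :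
    riskPerspective ρ γ (l • Ψ) = l * riskPerspective ρ (γ / l) Ψ := by
  have hscale : γ⁻¹ • l • Ψ = (γ / l)⁻¹ • Ψ := by
    rw [smul_smul, inv_div, div_eq_inv_mul]
  rw [riskPerspective, riskPerspective, hscale]
  field_simp

theorem conservativeRM_eq_iSup_riskPerspective (Ψ : Ω →ᵇ ℝ) :
    conservativeRM ρ Ψ = ⨆ γ : {g : ℝ // 0 < g}, riskPerspective ρ γ Ψ :=
  rfl

namespace IsConvexRiskMeasure

theorem riskPerspective (hρ : IsConvexRiskMeasure ρ) {γ : ℝ} (hγ : 0 < γ) :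
    IsConvexRiskMeasure (riskPerspective ρ γ) := by
  refine ⟨fun Φ Ψ l hl₀ hl₁ => ?_, fun Φ Ψ h => ?_, fun Φ m => ?_⟩
  · have hconv := hρ.1 (γ⁻¹ • Φ) (γ⁻¹ • Ψ) l hl₀ hl₁
    rw [smul_comm l, smul_comm (1 - l), ← smul_add] at hconv
    have := mul_le_mul_of_nonneg_left hconv hγ.le
    simp only [_root_.riskPerspective]
    linarith
  · have hmono : ρ (γ⁻¹ • Ψ) ≤ ρ (γ⁻¹ • Φ) :=
      hρ.2.1 _ _ fun ω => by
        simpa using mul_le_mul_of_nonneg_left (h ω) (inv_nonneg.mpr hγ.le)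
    have := mul_le_mul_of_nonneg_left hmono hγ.le
    simp only [_root_.riskPerspective]
    linarith
  · have hshift : γ⁻¹ • (Φ + const Ω m) = γ⁻¹ • Φ + const Ω (γ⁻¹ * m) := by
      ext ω
      simp
    simp only [_root_.riskPerspective, hshift, hρ.2.2]
    field_simp
    ring

theorem riskPerspective_le_iSup_neg (hρ : IsConvexRiskMeasure ρ) (Ψ : Ω →ᵇ ℝ) {γ : ℝ}
    (hγ : 0 < γ) : _root_.riskPerspective ρ γ Ψ ≤ ⨆ ω, -Ψ ω := by
  simpa using (hρ.riskPerspective hγ).le_add_iSup_neg Ψ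

theorem bddAbove_range_riskPerspective (hρ : IsConvexRiskMeasure ρ) (Ψ : Ω →ᵇ ℝ) :
    BddAbove (range fun γ : {g : ℝ // 0 < g} => _root_.riskPerspective ρ γ Ψ) :=
  ⟨⨆ ω, -Ψ ω, by rintro _ ⟨γ, rfl⟩; exact hρ.riskPerspective_le_iSup_neg Ψ γ.2⟩

theorem conservativeRM (hρ : IsConvexRiskMeasure ρ) : IsConvexRiskMeasure (conservativeRM ρ) :=
  IsConvexRiskMeasure.iSup (fun γ => hρ.riskPerspective γ.2) hρ.bddAbove_range_riskPerspective

end IsConvexRiskMeasure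

theorem conservativeRM_zero : conservativeRM ρ 0 = 0 := by
  simp [conservativeRM_eq_iSup_riskPerspective]

theorem conservativeRM_smul {l : ℝ} (hl : 0 ≤ l) (Ψ : Ω →ᵇ ℝ) :
    conservativeRM ρ (l • Ψ) = l * conservativeRM ρ Ψ := by
  rcases hl.eq_or_lt with rfl | hl
  · simp [conservativeRM_zero]
  have hdiv : Function.Surjective fun γ : {g : ℝ // 0 < g} =>
      (⟨γ / l, div_pos γ.2 hl⟩ : {g : ℝ // 0 < g}) := fun γ =>
    ⟨⟨γ * l, mul_pos γ.2 hl⟩, Subtype.ext (mul_div_cancel_right₀ _ hl.ne')⟩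
  simp only [conservativeRM_eq_iSup_riskPerspective, riskPerspective_smul hl.ne',
    ← Real.mul_iSup_of_nonneg hl.le]
  rw [hdiv.iSup_comp fun γ : {g : ℝ // 0 < g} => riskPerspective ρ γ Ψ]

end

theorem stmt3_general {Ω : Type*} [TopologicalSpace Ω]
    (ρ : (Ω →ᵇ ℝ) → ℝ) (hρ : IsConvexRiskMeasure ρ) :
    (∀ (Ψ : Ω →ᵇ ℝ) (γ : ℝ), 0 < γ →
        γ * ρ (γ⁻¹ • Ψ) - γ * ρ 0 ≤ ⨆ ω, -Ψ ω) ∧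
    IsConvexRiskMeasure (conservativeRM ρ) ∧
    (∀ (Ψ : Ω →ᵇ ℝ) (l : ℝ), 0 ≤ l →
        conservativeRM ρ (l • Ψ) = l * conservativeRM ρ Ψ) :=
  ⟨fun Ψ _ hγ => hρ.riskPerspective_le_iSup_neg Ψ hγ, hρ.conservativeRM,
    fun Ψ _ hl => conservativeRM_smul hl Ψ⟩

/-- For every `Ψ` and `γ > 0`, `γ ρ(Ψ/γ) - γ ρ(0) ≤ sup_ω (-Ψ(ω))`, so the conservative
risk measure `ρ_{0⁺}` is real-valued; moreover `ρ_{0⁺}` is a coherent risk measure: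
convex, monotone, cash translation invariant and positively homogeneous. -/
theorem stmt3 {Ω : Type*} [TopologicalSpace Ω] [DiscreteTopology Ω] [Nonempty Ω]
    (ρ : (Ω →ᵇ ℝ) → ℝ) (hρ : IsConvexRiskMeasure ρ) :
    (∀ (Ψ : Ω →ᵇ ℝ) (γ : ℝ), 0 < γ →
        γ * ρ (γ⁻¹ • Ψ) - γ * ρ 0 ≤ ⨆ ω, -Ψ ω) ∧
    IsConvexRiskMeasure (conservativeRM ρ) ∧
    (∀ (Ψ : Ω →ᵇ ℝ) (l : ℝ), 0 ≤ l →
        conservativeRM ρ (l • Ψ) = l * conservativeRM ρ Ψ) :=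
  stmt3_general ρ hρ
end

section
/- Let ρ be a convex risk measure on X (a Banach space under the supremum norm) and let ξ ∈ X. For Ψ ∈ X define ρ_{∞,ξ}(Ψ) = inf_{γ>0} γ·(ρ(ξ + Ψ/γ) − ρ(ξ)), the limit as γ → ∞ of the non-increasing difference quotients. Then the subdifferential ∂ρ(ξ) is nonempty, and ρ_{∞,ξ} is the support function of ∂ρ(ξ): for every Ψ ∈ X, ρ_{∞,ξ}(Ψ) = sup{ q(−Ψ) : q ∈ ∂ρ(ξ) }, and this supremum is attained by some q ∈ ∂ρ(ξ). -/
/-!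
Because `ρ` is monotone and cash invariant it is `1`-Lipschitz, so the difference quotients
`γ (ρ(ξ + Ψ/γ) - ρ(ξ))` are bounded below by `-‖Ψ‖` and their infimum `ρ_{∞,ξ}(Ψ)` is finite.
Reparametrizing `γ` shows that `ρ_{∞,ξ}` is positively homogeneous, and convexity of `ρ` with
weights `γ/(γ+δ)`, `δ/(γ+δ)` shows that it is subadditive. Hahn–Banach for this sublinear functional
gives, for each `Ψ`, a linear `g ≤ ρ_{∞,ξ}` with `g Ψ = ρ_{∞,ξ}(Ψ)`; since
`g ≤ ρ(ξ + ·) - ρ(ξ) ≤ ‖·‖`, `g` is continuous and `-g ∈ ∂ρ(ξ)`. Conversely, evaluating the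
subgradient inequality of `q ∈ ∂ρ(ξ)` at `Ψ/γ` gives `q(-Ψ) ≤ γ (ρ(ξ + Ψ/γ) - ρ(ξ))` for every `γ`.
-/

open BoundedContinuousFunction

/-- The subdifferential of `ρ` at `ξ`: continuous linear functionals `q` with
`ρ(ξ + Y) ≥ ρ(ξ) + q(-Y)` for all `Y`. -/
def riskSubdiff {Ω : Type*} [TopologicalSpace Ω] (ρ : (Ω →ᵇ ℝ) → ℝ) (ξ : Ω →ᵇ ℝ) :
    Set ((Ω →ᵇ ℝ) →L[ℝ] ℝ) :=
  {q | ∀ Y : Ω →ᵇ ℝ, ρ ξ + q (-Y) ≤ ρ (ξ + Y)}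

/-- The marginal risk measure of `ρ` centered at `ξ`:
`ρ_{∞,ξ}(Ψ) = inf_{γ > 0} γ (ρ(ξ + Ψ/γ) - ρ(ξ))`. -/
noncomputable def marginalAt {Ω : Type*} [TopologicalSpace Ω]
    (ρ : (Ω →ᵇ ℝ) → ℝ) (ξ Ψ : Ω →ᵇ ℝ) : ℝ :=
  ⨅ γ : {g : ℝ // 0 < g}, (γ : ℝ) * (ρ (ξ + ((γ : ℝ))⁻¹ • Ψ) - ρ ξ)

open Set

noncomputable def diffQuot {E : Type*} [AddCommGroup E] [Module ℝ E]
    (f : E → ℝ) (ξ Ψ : E) (γ : ℝ) : ℝ :=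
  γ * (f (ξ + γ⁻¹ • Ψ) - f ξ)

/-- For convex `f` this is the one-sided directional derivative
`lim_{t ↓ 0} (f (ξ + t Ψ) - f ξ) / t`, parametrized by `γ = 1 / t`. -/
noncomputable def oneSidedDirDeriv {E : Type*} [AddCommGroup E] [Module ℝ E]
    (f : E → ℝ) (ξ Ψ : E) : ℝ :=
  ⨅ γ : {g : ℝ // 0 < g}, diffQuot f ξ Ψ γ

section VectorSpace

variable {E : Type*} [AddCommGroup E] [Module ℝ E] {f : E → ℝ} {ξ : E}

theorem oneSidedDirDeriv_smul (Ψ : E) {c : ℝ} (hc : 0 < c) :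
    oneSidedDirDeriv f ξ (c • Ψ) = c * oneSidedDirDeriv f ξ Ψ := by
  rw [oneSidedDirDeriv, oneSidedDirDeriv, Real.mul_iInf_of_nonneg hc.le,
    ← (Equiv.mulLeft (⟨c, hc⟩ : {g : ℝ // 0 < g})).iInf_comp]
  congr 1 with γ
  have hγ : (γ : ℝ) ≠ 0 := γ.2.ne'
  simp only [diffQuot, Equiv.coe_mulLeft, Positive.val_mul, smul_smul]
  field_simp

theorem ConvexOn.diffQuot_add_le (hf : ConvexOn ℝ univ f) (A B : E) {γ δ : ℝ}
    (hγ : 0 < γ) (hδ : 0 < δ) :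
    diffQuot f ξ (A + B) (γ + δ) ≤ diffQuot f ξ A γ + diffQuot f ξ B δ := by
  have hγδ : 0 < γ + δ := add_pos hγ hδ
  have hpoint : ξ + (γ + δ)⁻¹ • (A + B) =
      (γ / (γ + δ)) • (ξ + γ⁻¹ • A) + (δ / (γ + δ)) • (ξ + δ⁻¹ • B) := by
    have ha : γ / (γ + δ) * γ⁻¹ = (γ + δ)⁻¹ := by field_simp
    have hb : δ / (γ + δ) * δ⁻¹ = (γ + δ)⁻¹ := by field_simp
    have hab : γ / (γ + δ) + δ / (γ + δ) = 1 := by field_simp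
    conv_lhs => rw [← one_smul ℝ ξ, ← hab]
    simp only [smul_add, smul_smul, add_smul, ha, hb]
    abel
  have hconv := hf.2 (mem_univ (ξ + γ⁻¹ • A)) (mem_univ (ξ + δ⁻¹ • B))
    (div_pos hγ hγδ).le (div_pos hδ hγδ).le (by field_simp)
  rw [← hpoint, smul_eq_mul, smul_eq_mul] at hconv
  have := mul_le_mul_of_nonneg_left hconv hγδ.le
  simp only [diffQuot]
  field_simp at this ⊢
  linarith

theorem le_oneSidedDirDeriv_of_subgradient {g : E →ₗ[ℝ] ℝ}
    (hg : ∀ Y, f ξ + g Y ≤ f (ξ + Y)) (Ψ : E) : g Ψ ≤ oneSidedDirDeriv f ξ Ψ := by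
  refine le_ciInf fun ⟨γ, hγ⟩ => ?_
  have := mul_le_mul_of_nonneg_left (hg (γ⁻¹ • Ψ)) hγ.le
  rw [map_smul, smul_eq_mul, mul_add, ← mul_assoc, mul_inv_cancel₀ hγ.ne', one_mul] at this
  simp only [diffQuot]
  linarith

theorem exists_linearMap_le_eq_of_sublinear (N : E → ℝ)
    (N_hom : ∀ c : ℝ, 0 < c → ∀ x, N (c • x) = c * N x) (N_add : ∀ x y, N (x + y) ≤ N x + N y)
    (x : E) : ∃ g : E →ₗ[ℝ] ℝ, (∀ y, g y ≤ N y) ∧ g x = N x := by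
  have N_zero : N 0 = 0 := by
    have := N_hom 2 two_pos 0
    rw [smul_zero] at this
    linarith
  have le_smul : ∀ c : ℝ, c * N x ≤ N (c • x) := by
    intro c
    rcases lt_trichotomy c 0 with hc | rfl | hc
    · have := N_add (c • x) ((-c) • x)
      rw [← add_smul, add_neg_cancel, zero_smul, N_zero, N_hom _ (neg_pos.2 hc)] at this
      linarith
    · simp [N_zero]
    · exact (N_hom c hc x).ge
  let f₀ : E →ₗ.[ℝ] ℝ := LinearPMap.mkSpanSingleton' x (N x) fun c hcx => by
    rcases smul_eq_zero.1 hcx with rfl | rfl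
    · exact zero_smul ℝ _
    · rw [N_zero, smul_zero]
  obtain ⟨g, hg_ext, hg_le⟩ := exists_extension_of_le_sublinear f₀ N N_hom N_add <| by
    rintro ⟨y, hy⟩
    obtain ⟨c, rfl⟩ := Submodule.mem_span_singleton.1 hy
    show f₀ ⟨c • x, hy⟩ ≤ _
    rw [LinearPMap.mkSpanSingleton'_apply]
    exact le_smul c
  refine ⟨g, hg_le, ?_⟩
  rw [hg_ext ⟨x, Submodule.mem_span_singleton_self x⟩]
  exact LinearPMap.mkSpanSingleton'_apply_self _ _ _ _

end VectorSpace

section NormedSpace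

variable {E : Type*} [NormedAddCommGroup E] [NormedSpace ℝ E] {f : E → ℝ} {K : NNReal}

theorem LipschitzWith.neg_mul_norm_le_diffQuot (hL : LipschitzWith K f) (ξ Ψ : E) {γ : ℝ}
    (hγ : 0 < γ) : -(K * ‖Ψ‖) ≤ diffQuot f ξ Ψ γ := by
  have := hL.le_add_mul ξ (ξ + γ⁻¹ • Ψ)
  rw [dist_self_add_right, norm_smul, Real.norm_of_nonneg (inv_pos.2 hγ).le] at this
  have := mul_le_mul_of_nonneg_left this hγ.le
  simp only [diffQuot]
  field_simp at this ⊢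
  linarith

theorem LipschitzWith.bddBelow_range_diffQuot (hL : LipschitzWith K f) (ξ Ψ : E) :
    BddBelow (range fun γ : {g : ℝ // 0 < g} => diffQuot f ξ Ψ γ) :=
  ⟨_, forall_mem_range.2 fun γ => hL.neg_mul_norm_le_diffQuot ξ Ψ γ.2⟩

theorem LipschitzWith.oneSidedDirDeriv_le_diffQuot (hL : LipschitzWith K f) (ξ Ψ : E) {γ : ℝ}
    (hγ : 0 < γ) : oneSidedDirDeriv f ξ Ψ ≤ diffQuot f ξ Ψ γ :=
  ciInf_le (hL.bddBelow_range_diffQuot ξ Ψ) ⟨γ, hγ⟩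

theorem LipschitzWith.oneSidedDirDeriv_le_sub (hL : LipschitzWith K f) (ξ Ψ : E) :
    oneSidedDirDeriv f ξ Ψ ≤ f (ξ + Ψ) - f ξ := by
  simpa [diffQuot] using hL.oneSidedDirDeriv_le_diffQuot ξ Ψ one_pos

theorem ConvexOn.oneSidedDirDeriv_add_le (hf : ConvexOn ℝ univ f) (hL : LipschitzWith K f)
    (ξ A B : E) :
    oneSidedDirDeriv f ξ (A + B) ≤ oneSidedDirDeriv f ξ A + oneSidedDirDeriv f ξ B :=
  le_ciInf_add_ciInf fun γ δ => (hL.oneSidedDirDeriv_le_diffQuot ξ _ (add_pos γ.2 δ.2)).trans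
    (hf.diffQuot_add_le A B γ.2 δ.2)

theorem ConvexOn.exists_subgradient_eq_oneSidedDirDeriv (hf : ConvexOn ℝ univ f)
    (hL : LipschitzWith K f) (ξ Ψ : E) :
    ∃ g : E →L[ℝ] ℝ, (∀ Y, f ξ + g Y ≤ f (ξ + Y)) ∧ g Ψ = oneSidedDirDeriv f ξ Ψ := by
  obtain ⟨g, hg_le, hg_eq⟩ := exists_linearMap_le_eq_of_sublinear (oneSidedDirDeriv f ξ)
    (fun c hc Y => oneSidedDirDeriv_smul Y hc) (hf.oneSidedDirDeriv_add_le hL ξ) Ψ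
  have hg_le_sub : ∀ Y, g Y ≤ f (ξ + Y) - f ξ := fun Y =>
    (hg_le Y).trans (hL.oneSidedDirDeriv_le_sub ξ Y)
  have hg_le_norm : ∀ Y, g Y ≤ K * ‖Y‖ := fun Y => by
    have := hL.le_add_mul (ξ + Y) ξ
    rw [dist_self_add_left] at this
    linarith [hg_le_sub Y]
  refine ⟨g.mkContinuous K fun Y => ?_, fun Y => ?_, hg_eq⟩
  · rw [Real.norm_eq_abs, abs_le]
    have := hg_le_norm (-Y)
    rw [map_neg, norm_neg] at this
    exact ⟨by linarith, hg_le_norm Y⟩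
  · rw [LinearMap.mkContinuous_apply]
    linarith [hg_le_sub Y]

end NormedSpace

namespace IsConvexRiskMeasure

variable {Ω : Type*} [TopologicalSpace Ω] {ρ : (Ω →ᵇ ℝ) → ℝ}

theorem convexOn (hρ : IsConvexRiskMeasure ρ) : ConvexOn ℝ univ ρ := by
  refine ⟨convex_univ, fun Φ _ Ψ _ a b ha _ hab => ?_⟩
  obtain rfl : b = 1 - a := by linarith
  exact hρ.1 Φ Ψ a ha (by linarith)

theorem lipschitzWith (hρ : IsConvexRiskMeasure ρ) : LipschitzWith 1 ρ := by
  obtain ⟨-, hmono, hcash⟩ := hρ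
  refine LipschitzWith.of_le_add fun Φ Ψ => ?_
  have hle : ∀ ω, (Ψ + const Ω (-dist Φ Ψ)) ω ≤ Φ ω := fun ω => by
    have := (Φ - Ψ).norm_coe_le_norm ω
    rw [← dist_eq_norm, Real.norm_eq_abs, abs_le] at this
    simp only [BoundedContinuousFunction.add_apply, const_apply,
      BoundedContinuousFunction.sub_apply] at this ⊢
    linarith
  simpa [hcash] using hmono _ _ hle

end IsConvexRiskMeasure

theorem mem_riskSubdiff_iff {Ω : Type*} [TopologicalSpace Ω] {ρ : (Ω →ᵇ ℝ) → ℝ}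
    {ξ : Ω →ᵇ ℝ} {q : (Ω →ᵇ ℝ) →L[ℝ] ℝ} :
    q ∈ riskSubdiff ρ ξ ↔ ∀ Y, ρ ξ + (-q) Y ≤ ρ (ξ + Y) := by
  show (∀ Y, ρ ξ + q (-Y) ≤ ρ (ξ + Y)) ↔ _
  simp only [map_neg, _root_.neg_apply]

theorem marginalAt_eq_oneSidedDirDeriv {Ω : Type*} [TopologicalSpace Ω] (ρ : (Ω →ᵇ ℝ) → ℝ)
    (ξ : Ω →ᵇ ℝ) : marginalAt ρ ξ = oneSidedDirDeriv ρ ξ :=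
  rfl

theorem stmt4_general {Ω : Type*} [TopologicalSpace Ω]
    (ρ : (Ω →ᵇ ℝ) → ℝ) (hρ : IsConvexRiskMeasure ρ) (ξ : Ω →ᵇ ℝ) :
    (riskSubdiff ρ ξ).Nonempty ∧
    ∀ Ψ : Ω →ᵇ ℝ,
      (∀ q ∈ riskSubdiff ρ ξ, q (-Ψ) ≤ marginalAt ρ ξ Ψ) ∧
      ∃ q ∈ riskSubdiff ρ ξ, marginalAt ρ ξ Ψ = q (-Ψ) := by
  simp only [marginalAt_eq_oneSidedDirDeriv]
  have attained : ∀ Ψ, ∃ q ∈ riskSubdiff ρ ξ, oneSidedDirDeriv ρ ξ Ψ = q (-Ψ) := fun Ψ => by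
    obtain ⟨g, hg, hgΨ⟩ := hρ.convexOn.exists_subgradient_eq_oneSidedDirDeriv hρ.lipschitzWith ξ Ψ
    exact ⟨-g, mem_riskSubdiff_iff.2 (by simpa using hg), by simpa using hgΨ.symm⟩
  refine ⟨(attained 0).imp fun q hq => hq.1, fun Ψ => ⟨fun q hq => ?_, attained Ψ⟩⟩
  simpa using le_oneSidedDirDeriv_of_subgradient (g := (-q).toLinearMap)
    (mem_riskSubdiff_iff.1 hq) Ψ

/-- The subdifferential `∂ρ(ξ)` of a convex risk measure is nonempty, and
`ρ_{∞,ξ}` is its support function: `ρ_{∞,ξ}(Ψ) = sup { q(-Ψ) : q ∈ ∂ρ(ξ) }`,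
the supremum being attained. -/
theorem stmt4 {Ω : Type*} [TopologicalSpace Ω] [DiscreteTopology Ω] [Nonempty Ω]
    (ρ : (Ω →ᵇ ℝ) → ℝ) (hρ : IsConvexRiskMeasure ρ) (ξ : Ω →ᵇ ℝ) :
    (riskSubdiff ρ ξ).Nonempty ∧
    ∀ Ψ : Ω →ᵇ ℝ,
      (∀ q ∈ riskSubdiff ρ ξ, q (-Ψ) ≤ marginalAt ρ ξ Ψ) ∧
      ∃ q ∈ riskSubdiff ρ ξ, marginalAt ρ ξ Ψ = q (-Ψ) :=
  stmt4_general ρ hρ ξ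
end

section
/- Let ρ_A and ρ_B be convex risk measures on X such that (ρ_A □ ρ_B)(0) > −∞, i.e. there exists c ∈ ℝ with ρ_A(−H) + ρ_B(H) ≥ c for all H ∈ X. Then for every Ψ ∈ X the set { ρ_A(Ψ − H) + ρ_B(H) : H ∈ X } is bounded below, and the inf-convolution ρ_{A,B}(Ψ) = (ρ_A □ ρ_B)(Ψ) defines a real-valued convex risk measure on X: it is convex, monotone, and cash translation invariant. -/
open BoundedContinuousFunction

/-!
Every property of a convex risk measure is inherited by the inf-convolution
pointwise in the hedge `H`, and passes to the infimum once the infimum is finite. Finiteness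
comes from monotonicity and cash invariance of `ρ_A`: since `Ψ ≤ ‖Ψ‖`, we get
`ρ_A(Ψ - H) ≥ ρ_A(-H) - ‖Ψ‖`, so `ρ_A(Ψ - H) + ρ_B(H) ≥ c - ‖Ψ‖`.
-/

open Set

theorem convexOn_univ_iff_forall_le {E : Type*} [AddCommGroup E] [Module ℝ E] {f : E → ℝ} :
    ConvexOn ℝ univ f ↔
      ∀ (x y : E) (l : ℝ), 0 ≤ l → l ≤ 1 → f (l • x + (1 - l) • y) ≤ l * f x + (1 - l) * f y := by
  refine ⟨fun hf x y l hl₀ hl₁ => hf.2 trivial trivial hl₀ (by linarith) (by ring),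
    fun hf => ⟨convex_univ, fun x _ y _ a b ha _ hab => ?_⟩⟩
  obtain rfl : b = 1 - a := by linarith
  exact hf x y a ha (by linarith)

section InfConvolution

variable {E : Type*} [AddCommGroup E] {f g : E → ℝ}

/-- Where `y ↦ f (x - y) + g y` is unbounded below, `⨅` returns the junk value `0`. -/
noncomputable def infConv (f g : E → ℝ) (x : E) : ℝ := ⨅ y, f (x - y) + g y

theorem infConv_le {x : E} (hx : BddBelow (range fun y => f (x - y) + g y)) (y : E) :
    infConv f g x ≤ f (x - y) + g y :=
  ciInf_le hx y

theorem infConv_add_of_forall {a : E} {m : ℝ} (hf : ∀ z, f (z + a) = f z - m) {x : E}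
    (hx : BddBelow (range fun y => f (x - y) + g y)) :
    infConv f g (x + a) = infConv f g x - m := by
  have hshift : ∀ y, f (x + a - y) + g y = f (x - y) + g y - m := fun y => by
    rw [add_sub_right_comm, hf]
    ring
  simp only [infConv, hshift]
  exact (ciInf_sub hx m).symm

theorem infConv_antitone [PartialOrder E] [IsOrderedAddMonoid E] (hf : Antitone f)
    (hbdd : ∀ x, BddBelow (range fun y => f (x - y) + g y)) : Antitone (infConv f g) :=
  fun _ x₂ hx => ciInf_mono (hbdd x₂) fun y => add_le_add_left (hf (sub_le_sub_right hx y)) _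

theorem ConvexOn.infConv [Module ℝ E] (hf : ConvexOn ℝ univ f) (hg : ConvexOn ℝ univ g)
    (hbdd : ∀ x, BddBelow (range fun y => f (x - y) + g y)) :
    ConvexOn ℝ univ (infConv f g) := by
  refine ⟨convex_univ, fun x₁ _ x₂ _ a b ha hb hab => ?_⟩
  simp only [smul_eq_mul, _root_.infConv, Real.mul_iInf_of_nonneg ha, Real.mul_iInf_of_nonneg hb]
  refine le_ciInf_add_ciInf fun y₁ y₂ => ?_
  have hsplit : a • x₁ + b • x₂ - (a • y₁ + b • y₂) = a • (x₁ - y₁) + b • (x₂ - y₂) := by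
    simp only [smul_sub]
    abel
  calc _root_.infConv f g (a • x₁ + b • x₂)
      ≤ f (a • (x₁ - y₁) + b • (x₂ - y₂)) + g (a • y₁ + b • y₂) :=
        hsplit ▸ infConv_le (hbdd _) _
    _ ≤ (a * f (x₁ - y₁) + b * f (x₂ - y₂)) + (a * g y₁ + b * g y₂) :=
        add_le_add (hf.2 trivial trivial ha hb hab) (hg.2 trivial trivial ha hb hab)
    _ = a * (f (x₁ - y₁) + g y₁) + b * (f (x₂ - y₂) + g y₂) := by ring

end InfConvolution

section RiskMeasure

variable {Ω : Type*} [TopologicalSpace Ω]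

theorem sub_norm_le_apply_add {ρ : (Ω →ᵇ ℝ) → ℝ} (hanti : Antitone ρ)
    (hcash : ∀ (Φ : Ω →ᵇ ℝ) (m : ℝ), ρ (Φ + const Ω m) = ρ Φ - m) (Φ Ψ : Ω →ᵇ ℝ) :
    ρ Φ - ‖Ψ‖ ≤ ρ (Φ + Ψ) := by
  have hle : Φ + Ψ ≤ Φ + const Ω ‖Ψ‖ := fun ω =>
    add_le_add_right (le_of_abs_le (Ψ.norm_coe_le_norm ω)) _
  exact hcash Φ ‖Ψ‖ ▸ hanti hle

theorem bddBelow_range_sub_add {ρA ρB : (Ω →ᵇ ℝ) → ℝ} (hAanti : Antitone ρA)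
    (hAcash : ∀ (Φ : Ω →ᵇ ℝ) (m : ℝ), ρA (Φ + const Ω m) = ρA Φ - m) {c : ℝ}
    (hc : ∀ H : Ω →ᵇ ℝ, c ≤ ρA (-H) + ρB H) (Ψ : Ω →ᵇ ℝ) :
    BddBelow (range fun H : Ω →ᵇ ℝ => ρA (Ψ - H) + ρB H) := by
  refine ⟨c - ‖Ψ‖, ?_⟩
  rintro _ ⟨H, rfl⟩
  have hshift := sub_norm_le_apply_add hAanti hAcash (-H) Ψ
  rw [neg_add_eq_sub] at hshift
  linarith [hc H]

end RiskMeasure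

theorem stmt7_general {Ω : Type*} [TopologicalSpace Ω]
    (ρA ρB : (Ω →ᵇ ℝ) → ℝ)
    (hA : IsConvexRiskMeasure ρA) (hB : IsConvexRiskMeasure ρB)
    (c : ℝ) (hc : ∀ H : Ω →ᵇ ℝ, c ≤ ρA (-H) + ρB H) :
    (∀ Ψ : Ω →ᵇ ℝ, BddBelow (Set.range fun H : Ω →ᵇ ℝ => ρA (Ψ - H) + ρB H)) ∧
    IsConvexRiskMeasure (fun Ψ : Ω →ᵇ ℝ => ⨅ H : Ω →ᵇ ℝ, (ρA (Ψ - H) + ρB H)) := by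
  obtain ⟨hAconv, hAanti, hAcash⟩ := hA
  have hbdd := bddBelow_range_sub_add hAanti hAcash hc
  have hconv : ConvexOn ℝ univ (infConv ρA ρB) :=
    (convexOn_univ_iff_forall_le.2 hAconv).infConv (convexOn_univ_iff_forall_le.2 hB.1) hbdd
  exact ⟨hbdd, convexOn_univ_iff_forall_le.1 hconv, infConv_antitone hAanti hbdd,
    fun Φ m => infConv_add_of_forall (hAcash · m) (hbdd Φ)⟩

/-- If `(ρ_A □ ρ_B)(0) > -∞` (i.e. `ρ_A(-H) + ρ_B(H)` is uniformly bounded below),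
then the inf-convolution `Ψ ↦ inf_H (ρ_A(Ψ - H) + ρ_B(H))` is everywhere bounded
below and defines a real-valued convex risk measure. -/
theorem stmt7 {Ω : Type*} [TopologicalSpace Ω] [DiscreteTopology Ω] [Nonempty Ω]
    (ρA ρB : (Ω →ᵇ ℝ) → ℝ)
    (hA : IsConvexRiskMeasure ρA) (hB : IsConvexRiskMeasure ρB)
    (c : ℝ) (hc : ∀ H : Ω →ᵇ ℝ, c ≤ ρA (-H) + ρB H) :
    (∀ Ψ : Ω →ᵇ ℝ, BddBelow (Set.range fun H : Ω →ᵇ ℝ => ρA (Ψ - H) + ρB H)) ∧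
    IsConvexRiskMeasure (fun Ψ : Ω →ᵇ ℝ => ⨅ H : Ω →ᵇ ℝ, (ρA (Ψ - H) + ρB H)) :=
  stmt7_general ρA ρB hA hB c hc
end

section
/- Let H be a nonempty convex subset of X with inf_{ξ∈H} sup_{ω∈Ω} ξ(ω) > −∞, let ν^H(Ψ) = inf{ m ∈ ℝ : ∃ ξ ∈ H with m + Ψ ≥ ξ pointwise }, and let q : X → ℝ be a linear functional that is positive (Ψ ≥ 0 pointwise implies q(Ψ) ≥ 0) and normalized (q(1) = 1). Then the minimal penalty of ν^H at q equals the support function of H: sup_{Ψ∈X} ( q(−Ψ) − ν^H(Ψ) ) = sup_{ξ∈H} q(−ξ), as an equality in ℝ ∪ {+∞}. -/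
open BoundedContinuousFunction

/-!
Both sides are compared through the support function `s = sup_{ξ ∈ H} q(-ξ)`. If `ξ ∈ H` and
`m + Ψ ≥ ξ`, then positivity and normalization of `q` give `q(-Ψ) - m ≤ q(-ξ) ≤ s`; taking the
infimum over admissible `m` bounds the penalty by `s`. Conversely every `ξ ∈ H` is admissible for
`Ψ = ξ` with `m = 0`, so `ν^H(ξ) ≤ 0` and the penalty is at least `q(-ξ)`.
-/

/-- The risk measure generated by a convex set `H`:
`ν^H(Ψ) = inf { m : ∃ ξ ∈ H, m + Ψ ≥ ξ pointwise }`. -/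
noncomputable def nuH {Ω : Type*} [TopologicalSpace Ω]
    (H : Set (Ω →ᵇ ℝ)) (Ψ : Ω →ᵇ ℝ) : ℝ :=
  sInf {m : ℝ | ∃ ξ ∈ H, ∀ ω, ξ ω ≤ m + Ψ ω}

section

variable {Ω : Type*} [TopologicalSpace Ω]

lemma nuH_le_zero_of_mem {H : Set (Ω →ᵇ ℝ)} {ξ : Ω →ᵇ ℝ} (hξ : ξ ∈ H) : nuH H ξ ≤ 0 := by
  have h0 : (0 : ℝ) ∈ {m : ℝ | ∃ ξ' ∈ H, ∀ ω, ξ' ω ≤ m + ξ ω} := ⟨ξ, hξ, fun ω => by simp⟩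
  by_cases hbdd : BddBelow {m : ℝ | ∃ ξ' ∈ H, ∀ ω, ξ' ω ≤ m + ξ ω}
  · exact csInf_le hbdd h0
  · exact (Real.sInf_of_not_bddBelow hbdd).le

lemma nonempty_nuH_set {H : Set (Ω →ᵇ ℝ)} (hne : H.Nonempty) (Ψ : Ω →ᵇ ℝ) :
    {m : ℝ | ∃ ξ ∈ H, ∀ ω, ξ ω ≤ m + Ψ ω}.Nonempty := by
  obtain ⟨ξ₀, hξ₀⟩ := hne
  refine ⟨‖ξ₀‖ + ‖Ψ‖, ξ₀, hξ₀, fun ω => ?_⟩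
  linarith [(abs_le.1 (ξ₀.norm_coe_le_norm ω)).2, (abs_le.1 (Ψ.norm_coe_le_norm ω)).1]

section PositiveFunctional

variable (q : (Ω →ᵇ ℝ) →ₗ[ℝ] ℝ) (hpos : ∀ Ψ : Ω →ᵇ ℝ, (∀ ω, 0 ≤ Ψ ω) → 0 ≤ q Ψ)
  (hnorm : q (const Ω (1 : ℝ)) = 1)
include hpos hnorm

lemma sub_le_map_neg_of_le_const_add {Ψ ξ : Ω →ᵇ ℝ} {m : ℝ} (hle : ∀ ω, ξ ω ≤ m + Ψ ω) :
    q (-Ψ) - m ≤ q (-ξ) := by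
  have hconst : q (const Ω m) = m := by
    rw [show const Ω m = m • const Ω (1 : ℝ) by ext; simp, map_smul, hnorm, smul_eq_mul, mul_one]
  have hgap : 0 ≤ q (const Ω m + Ψ - ξ) := hpos _ fun ω => by simp [sub_nonneg, hle ω]
  rw [map_sub, map_add, hconst] at hgap
  rw [map_neg, map_neg]
  linarith

lemma sub_le_nuH_of_forall_map_neg_le {H : Set (Ω →ᵇ ℝ)} (hne : H.Nonempty) {s : ℝ}
    (hs : ∀ ξ ∈ H, q (-ξ) ≤ s) (Ψ : Ω →ᵇ ℝ) : q (-Ψ) - s ≤ nuH H Ψ :=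
  le_csInf (nonempty_nuH_set hne Ψ) fun m ⟨ξ, hξ, hle⟩ => by
    linarith [sub_le_map_neg_of_le_const_add q hpos hnorm hle, hs ξ hξ]

lemma sub_nuH_le_iSup {H : Set (Ω →ᵇ ℝ)} (hne : H.Nonempty) (Ψ : Ω →ᵇ ℝ) :
    ((q (-Ψ) - nuH H Ψ : ℝ) : EReal) ≤ ⨆ ξ : H, ((q (-(ξ : Ω →ᵇ ℝ)) : ℝ) : EReal) := by
  set S := ⨆ ξ : H, ((q (-(ξ : Ω →ᵇ ℝ)) : ℝ) : EReal)
  have hmem : ∀ ξ ∈ H, ((q (-ξ) : ℝ) : EReal) ≤ S := fun ξ hξ =>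
    le_iSup (fun ξ : H => ((q (-(ξ : Ω →ᵇ ℝ)) : ℝ) : EReal)) ⟨ξ, hξ⟩
  by_cases htop : S = ⊤
  · exact htop ▸ le_top
  have hbot : S ≠ ⊥ := ne_bot_of_le_ne_bot (EReal.coe_ne_bot _) (hmem _ hne.some_mem)
  rw [← EReal.coe_toReal htop hbot] at hmem ⊢
  have := sub_le_nuH_of_forall_map_neg_le q hpos hnorm hne
    (fun ξ hξ => EReal.coe_le_coe_iff.1 (hmem ξ hξ)) Ψ
  exact EReal.coe_le_coe_iff.2 (by linarith)

end PositiveFunctional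

end

theorem stmt11_general {Ω : Type*} [TopologicalSpace Ω]
    (H : Set (Ω →ᵇ ℝ)) (hne : H.Nonempty)
    (q : (Ω →ᵇ ℝ) →ₗ[ℝ] ℝ)
    (hpos : ∀ Ψ : Ω →ᵇ ℝ, (∀ ω, 0 ≤ Ψ ω) → 0 ≤ q Ψ)
    (hnorm : q (BoundedContinuousFunction.const Ω (1 : ℝ)) = 1) :
    (⨆ Ψ : Ω →ᵇ ℝ, ((q (-Ψ) - nuH H Ψ : ℝ) : EReal))
      = ⨆ ξ : H, ((q (-(ξ : Ω →ᵇ ℝ)) : ℝ) : EReal) := by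
  refine le_antisymm (iSup_le (sub_nuH_le_iSup q hpos hnorm hne)) (iSup_le fun ξ => ?_)
  refine le_iSup_of_le (ξ : Ω →ᵇ ℝ) (EReal.coe_le_coe_iff.2 ?_)
  linarith [nuH_le_zero_of_mem ξ.2]

/-- For a positive normalized linear functional `q`, the minimal penalty of `ν^H`
at `q` equals the support function of `H`:
`sup_Ψ (q(-Ψ) - ν^H(Ψ)) = sup_{ξ ∈ H} q(-ξ)` in `ℝ ∪ {+∞}` (inside `EReal`). -/
theorem stmt11 {Ω : Type*} [TopologicalSpace Ω] [DiscreteTopology Ω] [Nonempty Ω]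
    (H : Set (Ω →ᵇ ℝ)) (hne : H.Nonempty) (hconv : Convex ℝ H)
    (b : ℝ) (hb : ∀ ξ ∈ H, b ≤ ⨆ ω, ξ ω)
    (q : (Ω →ᵇ ℝ) →ₗ[ℝ] ℝ)
    (hpos : ∀ Ψ : Ω →ᵇ ℝ, (∀ ω, 0 ≤ Ψ ω) → 0 ≤ q Ψ)
    (hnorm : q (BoundedContinuousFunction.const Ω (1 : ℝ)) = 1) :
    (⨆ Ψ : Ω →ᵇ ℝ, ((q (-Ψ) - nuH H Ψ : ℝ) : EReal))
      = ⨆ ξ : H, ((q (-(ξ : Ω →ᵇ ℝ)) : ℝ) : EReal) :=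
  stmt11_general H hne q hpos hnorm
end

section
/- Let ρ be a convex risk measure on X, let γ_A, γ_B > 0 and γ_C = γ_A + γ_B, and for γ > 0 let ρ_γ(Ψ) = γ·ρ(Ψ/γ). Then the γ-tolerant risk measures satisfy the semigroup property under inf-convolution, and the inf-convolution is exact at F* = (γ_B/γ_C)·Ψ: for every Ψ ∈ X, inf_{F∈X} { ρ_{γ_A}(Ψ − F) + ρ_{γ_B}(F) } = ρ_{γ_C}(Ψ) = ρ_{γ_A}(Ψ − F*) + ρ_{γ_B}(F*). -/
open BoundedContinuousFunction

/-- The `γ`-tolerant (dilated) risk measure `ρ_γ(Ψ) = γ ρ(Ψ/γ)`. -/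
noncomputable def dilated {Ω : Type*} [TopologicalSpace Ω]
    (ρ : (Ω →ᵇ ℝ) → ℝ) (γ : ℝ) (Ψ : Ω →ᵇ ℝ) : ℝ :=
  γ * ρ (γ⁻¹ • Ψ)

/-
`(γ, Ψ) ↦ γ ρ(Ψ/γ)` is the perspective of the convex function `ρ`, hence subadditive:
convexity of `ρ` with weights `γ_A/γ_C` and `γ_B/γ_C` gives
`ρ_{γ_C}(Ψ) ≤ ρ_{γ_A}(Ψ - F) + ρ_{γ_B}(F)` for every `F`. Splitting `Ψ` in proportion to the
tolerances, `F* = (γ_B/γ_C) Ψ`, both arguments of `ρ` become `Ψ/γ_C` and equality holds.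
-/
open Set

section Dilation

variable {Ω : Type*} [TopologicalSpace Ω]

theorem IsConvexRiskMeasure.convexOn_s15 {ρ : (Ω →ᵇ ℝ) → ℝ} (hρ : IsConvexRiskMeasure ρ) :
    ConvexOn ℝ univ ρ := by
  refine ⟨convex_univ, fun Φ _ Ψ _ a b ha hb hab => ?_⟩
  obtain rfl : b = 1 - a := by linarith
  exact hρ.1 Φ Ψ a ha (by linarith)

theorem dilated_smul_div (ρ : (Ω →ᵇ ℝ) → ℝ) {γ δ : ℝ} (hγ : γ ≠ 0) (hδ : δ ≠ 0)
    (Ψ : Ω →ᵇ ℝ) : dilated ρ γ ((γ / δ) • Ψ) = γ / δ * dilated ρ δ Ψ := by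
  rw [dilated, dilated, smul_smul, div_eq_mul_inv, inv_mul_cancel_left₀ hγ]
  field_simp

theorem dilated_add_le {ρ : (Ω →ᵇ ℝ) → ℝ} (hρ : ConvexOn ℝ univ ρ) {a b : ℝ} (ha : 0 < a)
    (hb : 0 < b) (Φ Ψ : Ω →ᵇ ℝ) :
    dilated ρ (a + b) (Φ + Ψ) ≤ dilated ρ a Φ + dilated ρ b Ψ := by
  have hab : 0 < a + b := by positivity
  have hsplit : (a + b)⁻¹ • (Φ + Ψ) = (a / (a + b)) • (a⁻¹ • Φ) + (b / (a + b)) • (b⁻¹ • Ψ) := by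
    rw [smul_smul, smul_smul, smul_add]
    congr 2 <;> field_simp
  have hconv := hρ.2 (mem_univ (a⁻¹ • Φ)) (mem_univ (b⁻¹ • Ψ)) (by positivity : 0 ≤ a / (a + b))
    (by positivity : 0 ≤ b / (a + b)) (by field_simp)
  rw [← hsplit, smul_eq_mul, smul_eq_mul] at hconv
  calc dilated ρ (a + b) (Φ + Ψ)
      ≤ (a + b) * (a / (a + b) * ρ (a⁻¹ • Φ) + b / (a + b) * ρ (b⁻¹ • Ψ)) :=
        mul_le_mul_of_nonneg_left hconv hab.le
    _ = dilated ρ a Φ + dilated ρ b Ψ := by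
        rw [dilated, dilated]
        field_simp

end Dilation

theorem stmt15_general {Ω : Type*} [TopologicalSpace Ω]
    (ρ : (Ω →ᵇ ℝ) → ℝ) (hρ : IsConvexRiskMeasure ρ)
    (γA γB : ℝ) (hγA : 0 < γA) (hγB : 0 < γB) (Ψ : Ω →ᵇ ℝ) :
    (⨅ F : Ω →ᵇ ℝ, (dilated ρ γA (Ψ - F) + dilated ρ γB F))
        = dilated ρ (γA + γB) Ψ ∧
    dilated ρ (γA + γB) Ψ
        = dilated ρ γA (Ψ - (γB / (γA + γB)) • Ψ)
          + dilated ρ γB ((γB / (γA + γB)) • Ψ) := by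
  have hγC : γA + γB ≠ 0 := by positivity
  have hexact : dilated ρ (γA + γB) Ψ
      = dilated ρ γA (Ψ - (γB / (γA + γB)) • Ψ) + dilated ρ γB ((γB / (γA + γB)) • Ψ) := by
    have hrest : Ψ - (γB / (γA + γB)) • Ψ = (γA / (γA + γB)) • Ψ := by
      rw [show γA / (γA + γB) = 1 - γB / (γA + γB) by field_simp; ring]
      module
    rw [hrest, dilated_smul_div ρ hγA.ne' hγC, dilated_smul_div ρ hγB.ne' hγC, ← add_mul,
      ← add_div, div_self hγC, one_mul]
  have hlower (F : Ω →ᵇ ℝ) :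
      dilated ρ (γA + γB) Ψ ≤ dilated ρ γA (Ψ - F) + dilated ρ γB F := by
    simpa using dilated_add_le hρ.convexOn_s15 hγA hγB (Ψ - F) F
  refine ⟨le_antisymm ?_ (le_ciInf hlower), hexact⟩
  exact hexact ▸ ciInf_le ⟨_, forall_mem_range.2 hlower⟩ _

/-- Semigroup property of `γ`-tolerant risk measures under inf-convolution:
`ρ_{γ_A} □ ρ_{γ_B} = ρ_{γ_A + γ_B}`, the inf-convolution being exact at
`F* = (γ_B/(γ_A+γ_B)) • Ψ`. -/
theorem stmt15 {Ω : Type*} [TopologicalSpace Ω] [DiscreteTopology Ω] [Nonempty Ω]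
    (ρ : (Ω →ᵇ ℝ) → ℝ) (hρ : IsConvexRiskMeasure ρ)
    (γA γB : ℝ) (hγA : 0 < γA) (hγB : 0 < γB) (Ψ : Ω →ᵇ ℝ) :
    (⨅ F : Ω →ᵇ ℝ, (dilated ρ γA (Ψ - F) + dilated ρ γB F))
        = dilated ρ (γA + γB) Ψ ∧
    dilated ρ (γA + γB) Ψ
        = dilated ρ γA (Ψ - (γB / (γA + γB)) • Ψ)
          + dilated ρ γB ((γB / (γA + γB)) • Ψ) :=
  stmt15_general ρ hρ γA γB hγA hγB Ψ
end

section
/- (Existence of an optimal hedge.) Let ρ be a convex risk measure on B compatible with P and continuous from below, and let V be a nonempty convex subset of B that is bounded in L^∞: there exists a constant C with |ξ| ≤ C P-a.s. for every ξ ∈ V. Then for every X ∈ B the hedging infimum ρ^m(X) = inf_{ξ∈V} ρ(X − ξ) is finite and attained in the closure of V with respect to almost-sure convergence: there exist ξ* ∈ B with |ξ*| ≤ C P-a.s. and a sequence (ξ_n) of elements of V converging to ξ* P-almost surely, such that ρ(X − ξ*) = inf_{ξ∈V} ρ(X − ξ). -/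
open MeasureTheory Filter

/-- Membership in `B`, the set of bounded measurable real-valued functions. -/
def InB {Ω : Type*} [MeasurableSpace Ω] (f : Ω → ℝ) : Prop :=
  Measurable f ∧ ∃ C : ℝ, ∀ ω, |f ω| ≤ C

/-!
Take a minimizing sequence `ξₙ ∈ V`. Since `ξ ↦ ρ (X - ξ)` is convex, a convex combination of
`ξₙ, ξₙ₊₁, …` is at least as good as the worst of them, so forward convex combinations are again
minimizing. As `V` is bounded in `L²`, the parallelogram law produces forward convex combinations
that converge in `L²` (a Komlós-type argument), hence almost surely along a subsequence, to some
`ξ*`. To pass to the limit in `ρ`, continuity from below and convexity give the Lebesgue property: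
`ρ (Ψₙ)` is squeezed between `ρ (infₖ≥ₙ Ψₖ)` and `2 ρ Ψ - ρ (2 Ψ - supₖ≥ₙ Ψₖ)`, and both
`infₖ≥ₙ Ψₖ` and `2 Ψ - supₖ≥ₙ Ψₖ` increase to `Ψ`.
-/

open Set Topology

section Order

variable {α : Type*} [ConditionallyCompleteLinearOrder α] [TopologicalSpace α] [OrderTopology α]
  [DenselyOrdered α]

theorem Filter.Tendsto.ciInf_tail {u : ℕ → α} {l : α} (hu : BddBelow (range u))
    (h : Tendsto u atTop (𝓝 l)) : Tendsto (fun j => ⨅ k, u (j + k)) atTop (𝓝 l) := by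
  have htail (j : ℕ) : BddBelow (range fun k => u (j + k)) :=
    hu.mono (range_comp_subset_range _ u)
  refine tendsto_order.2 ⟨fun a ha => ?_, fun a ha => ?_⟩
  · obtain ⟨b, hab, hbl⟩ := exists_between ha
    obtain ⟨N, hN⟩ := eventually_atTop.1 (h.eventually (lt_mem_nhds hbl))
    filter_upwards [eventually_ge_atTop N] with j hj
    exact hab.trans_le (le_ciInf fun k => (hN _ (by omega)).le)
  · filter_upwards [h.eventually (gt_mem_nhds ha)] with j hj
    exact (ciInf_le (htail j) 0).trans_lt hj

end Order

section Hilbert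

variable {E : Type*} [NormedAddCommGroup E] [InnerProductSpace ℝ E]

theorem parallelogram_law_midpoint (x y : E) :
    ‖x - y‖ ^ 2 = 2 * ‖x‖ ^ 2 + 2 * ‖y‖ ^ 2 - 4 * ‖(2 : ℝ)⁻¹ • (x + y)‖ ^ 2 := by
  have := parallelogram_law_with_norm ℝ x y
  rw [norm_smul, mul_pow, Real.norm_of_nonneg (by norm_num)]
  linarith

theorem cauchySeq_of_antitone_convex_of_norm_sq_le {S : ℕ → Set E} (hS : Antitone S)
    (hSc : ∀ n, Convex ℝ (S n)) {g : ℕ → E} (hg : ∀ n, g n ∈ S n) {a b : ℕ → ℝ}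
    (ha : ∀ n, ∀ x ∈ S n, a n ≤ ‖x‖ ^ 2)
    (hb : ∀ n m, n ≤ m → ‖g m‖ ^ 2 ≤ b n) (hab : Tendsto (fun n => b n - a n) atTop (𝓝 0)) :
    CauchySeq g := by
  refine Metric.cauchySeq_iff'.2 fun ε hε => ?_
  obtain ⟨N, hN⟩ :=
    eventually_atTop.1 (hab.eventually (gt_mem_nhds (by positivity : 0 < ε ^ 2 / 4)))
  refine ⟨N, fun n hn => lt_of_pow_lt_pow_left₀ 2 hε.le ?_⟩
  have hmid : (2 : ℝ)⁻¹ • (g n + g N) ∈ S N := by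
    simpa [smul_add] using hSc N (hS hn (hg n)) (hg N) (by norm_num : (0 : ℝ) ≤ 2⁻¹)
      (by norm_num : (0 : ℝ) ≤ 2⁻¹) (by norm_num)
  have := hN N le_rfl
  -- The midpoint lies in `S N`, so the parallelogram law gives `‖g n - g N‖² ≤ 4 (b N - a N)`.
  rw [dist_eq_norm, parallelogram_law_midpoint]
  linarith [ha N _ hmid, hb N n hn, hb N N le_rfl]

theorem exists_tendsto_of_mem_convexHull_tail [CompleteSpace E] {f : ℕ → E} {R : ℝ}
    (hf : ∀ n, ‖f n‖ ≤ R) :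
    ∃ g : ℕ → E, (∀ n, g n ∈ convexHull ℝ (f '' Ici n)) ∧ ∃ l, Tendsto g atTop (𝓝 l) := by
  set S : ℕ → Set E := fun n => convexHull ℝ (f '' Ici n)
  have hS : Antitone S := fun n m h => convexHull_mono (image_mono (Ici_subset_Ici.2 h))
  have hfS (n : ℕ) : f n ∈ S n := subset_convexHull ℝ _ (mem_image_of_mem f self_mem_Ici)
  set c : ℕ → ℝ := fun n => sInf ((‖·‖ ^ 2) '' S n)
  have hne (n : ℕ) : ((‖·‖ ^ 2) '' S n).Nonempty := ⟨_, mem_image_of_mem _ (hfS n)⟩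
  have hbdd (n : ℕ) : BddBelow ((‖·‖ ^ 2) '' S n) := ⟨0, by rintro _ ⟨x, -, rfl⟩; positivity⟩
  have hc_le (n : ℕ) (x : E) (hx : x ∈ S n) : c n ≤ ‖x‖ ^ 2 := csInf_le (hbdd n) ⟨x, hx, rfl⟩
  have hc_mono : Monotone c := fun n m h => csInf_le_csInf (hbdd n) (hne m) (image_mono (hS h))
  have hc_bdd : BddAbove (range c) :=
    ⟨R ^ 2, by rintro _ ⟨n, rfl⟩; exact (hc_le n _ (hfS n)).trans (by gcongr; exact hf n)⟩
  have hc_lim := tendsto_atTop_ciSup hc_mono hc_bdd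
  have hmin (n : ℕ) : ∃ x ∈ S n, ‖x‖ ^ 2 < c n + 1 / (n + 1) := by
    have hpos : (0 : ℝ) < 1 / (n + 1) := by positivity
    obtain ⟨_, ⟨x, hx, rfl⟩, hlt⟩ := exists_lt_of_csInf_lt (hne n) (lt_add_of_pos_right (c n) hpos)
    exact ⟨x, hx, hlt⟩
  choose g hgS hg using hmin
  refine ⟨g, hgS, cauchySeq_tendsto_of_complete (cauchySeq_of_antitone_convex_of_norm_sq_le hS
    (fun n => convex_convexHull ℝ _) hgS hc_le (b := fun n => (⨆ k, c k) + 1 / (n + 1)) ?_ ?_)⟩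
  · intro n m hnm
    have : (1 : ℝ) / (m + 1) ≤ 1 / (n + 1) := by gcongr
    linarith [hg m, le_ciSup hc_bdd m]
  · simpa using ((tendsto_one_div_add_atTop_nhds_zero_nat (𝕜 := ℝ)).const_add (⨆ k, c k)).sub hc_lim

end Hilbert

namespace MeasureTheory.Lp

variable {α E : Type*} [MeasurableSpace α] {μ : Measure α} [NormedAddCommGroup E]
  [NormedSpace ℝ E] {p : ENNReal}

theorem exists_ae_eq_of_mem_convexHull {t : Set (Lp E p μ)} {s : Set (α → E)}
    (hts : ∀ G ∈ t, ∃ f ∈ s, G =ᵐ[μ] f) {G : Lp E p μ} (hG : G ∈ convexHull ℝ t) :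
    ∃ f ∈ convexHull ℝ s, G =ᵐ[μ] f := by
  refine convexHull_min (t := {G : Lp E p μ | ∃ f ∈ convexHull ℝ s, G =ᵐ[μ] f})
    (fun G hG => ?_) ?_ hG
  · obtain ⟨f, hf, hGf⟩ := hts G hG
    exact ⟨f, subset_convexHull ℝ s hf, hGf⟩
  · rintro G₁ ⟨f₁, hf₁, h₁⟩ G₂ ⟨f₂, hf₂, h₂⟩ a b ha hb hab
    refine ⟨a • f₁ + b • f₂, convex_convexHull ℝ s hf₁ hf₂ ha hb hab, ?_⟩
    filter_upwards [Lp.coeFn_add (a • G₁) (b • G₂), Lp.coeFn_smul a G₁, Lp.coeFn_smul b G₂, h₁, h₂]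
      with ω hadd hsmul₁ hsmul₂ he₁ he₂
    simp only [hadd, Pi.add_apply, hsmul₁, hsmul₂, Pi.smul_apply, he₁, he₂]

end MeasureTheory.Lp

theorem exists_ae_tendsto_of_mem_convexHull_tail {Ω E : Type*} [MeasurableSpace Ω]
    {P : Measure Ω} [IsFiniteMeasure P] [NormedAddCommGroup E] [InnerProductSpace ℝ E]
    [CompleteSpace E] {f : ℕ → Ω → E} {C : ℝ} (hf : ∀ n, AEStronglyMeasurable (f n) P)
    (hb : ∀ n, ∀ᵐ ω ∂P, ‖f n ω‖ ≤ C) :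
    ∃ g : ℕ → Ω → E, (∀ n, g n ∈ convexHull ℝ (f '' Ici n)) ∧
      ∃ l : Ω → E, ∀ᵐ ω ∂P, Tendsto (fun n => g n ω) atTop (𝓝 (l ω)) := by
  have hmem (n : ℕ) : MemLp (f n) 2 P := MemLp.of_bound (hf n) C (hb n)
  set F : ℕ → Lp E 2 P := fun n => (hmem n).toLp
  have hF (n : ℕ) : ‖F n‖ ≤ measureUnivNNReal P ^ (2 : ENNReal).toReal⁻¹ * |C| :=
    Lp.norm_le_of_ae_bound (abs_nonneg C) <| ((hmem n).coeFn_toLp.and (hb n)).mono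
      fun ω ⟨heq, hle⟩ => heq ▸ hle.trans (le_abs_self C)
  obtain ⟨G, hG, L, hGL⟩ := exists_tendsto_of_mem_convexHull_tail hF
  have hlift (n : ℕ) : ∃ g ∈ convexHull ℝ (f '' Ici n), G n =ᵐ[P] g :=
    Lp.exists_ae_eq_of_mem_convexHull (by
      rintro _ ⟨k, hk, rfl⟩
      exact ⟨f k, mem_image_of_mem f hk, (hmem k).coeFn_toLp⟩) (hG n)
  choose g hg hGg using hlift
  obtain ⟨ns, hns, hae⟩ := (tendstoInMeasure_of_tendsto_Lp hGL).exists_seq_tendsto_ae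
  refine ⟨g ∘ ns, fun n => convexHull_mono (image_mono (Ici_subset_Ici.2 (hns.id_le n)))
    (hg (ns n)), L, ?_⟩
  filter_upwards [hae, ae_all_iff.2 hGg] with ω hω hGω
  exact hω.congr fun n => hGω (ns n)

theorem abs_max_neg_min_le (K x : ℝ) : |max (-K) (min K x)| ≤ |K| :=
  abs_le.2 ⟨(neg_le_neg (le_abs_self K)).trans (le_max_left _ _),
    max_le (neg_le_abs K) ((min_le_left _ _).trans (le_abs_self K))⟩

section BoundedFunctions

variable {Ω : Type*} [MeasurableSpace Ω] {f g : Ω → ℝ}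

theorem inB_const (c : ℝ) : InB fun _ : Ω => c := ⟨measurable_const, |c|, fun _ => le_rfl⟩

theorem InB.add (hf : InB f) (hg : InB g) : InB (f + g) := by
  obtain ⟨hfm, Cf, hCf⟩ := hf
  obtain ⟨hgm, Cg, hCg⟩ := hg
  exact ⟨hfm.add hgm, Cf + Cg, fun ω => (abs_add_le _ _).trans (add_le_add (hCf ω) (hCg ω))⟩

theorem InB.neg (hf : InB f) : InB (-f) := by
  obtain ⟨hfm, Cf, hCf⟩ := hf
  exact ⟨hfm.neg, Cf, fun ω => by simpa using hCf ω⟩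

theorem InB.sub (hf : InB f) (hg : InB g) : InB (f - g) := by
  simpa [sub_eq_add_neg] using hf.add hg.neg

theorem InB.const_smul (hf : InB f) (c : ℝ) : InB (c • f) := by
  obtain ⟨hfm, Cf, hCf⟩ := hf
  exact ⟨hfm.const_smul c, |c| * Cf, fun ω => by
    simpa [abs_mul] using mul_le_mul_of_nonneg_left (hCf ω) (abs_nonneg c)⟩

theorem exists_inB_ae_eq {P : Measure Ω} (hf : AEMeasurable f P) {K : ℝ}
    (hK : ∀ᵐ ω ∂P, |f ω| ≤ K) : ∃ g, InB g ∧ (∀ ω, |g ω| ≤ |K|) ∧ g =ᵐ[P] f := by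
  refine ⟨fun ω => max (-K) (min K (hf.mk f ω)),
    ⟨measurable_const.max (measurable_const.min hf.measurable_mk), |K|,
      fun ω => abs_max_neg_min_le K _⟩, fun ω => abs_max_neg_min_le K _, ?_⟩
  filter_upwards [hK, hf.ae_eq_mk] with ω hω hmk
  rw [← hmk, min_eq_right (abs_le.1 hω).2, max_eq_right (abs_le.1 hω).1]

theorem exists_inB_of_ae_tendsto {P : Measure Ω} {u : ℕ → Ω → ℝ} {l : Ω → ℝ} {C : ℝ}
    (hu : ∀ n, Measurable (u n)) (hb : ∀ n, ∀ᵐ ω ∂P, |u n ω| ≤ C)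
    (hl : ∀ᵐ ω ∂P, Tendsto (fun n => u n ω) atTop (𝓝 (l ω))) :
    ∃ ξ, InB ξ ∧ (∀ᵐ ω ∂P, |ξ ω| ≤ C) ∧ ∀ᵐ ω ∂P, Tendsto (fun n => u n ω) atTop (𝓝 (ξ ω)) := by
  have hlC : ∀ᵐ ω ∂P, |l ω| ≤ C := by
    filter_upwards [hl, ae_all_iff.2 hb] with ω hω hbω
    exact le_of_tendsto' hω.abs hbω
  obtain ⟨ξ, hξ, -, hξl⟩ := exists_inB_ae_eq
    (aemeasurable_of_tendsto_metrizable_ae' (fun n => (hu n).aemeasurable) hl) hlC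
  refine ⟨ξ, hξ, ?_, ?_⟩
  · filter_upwards [hξl, hlC] with ω h h'
    rwa [h]
  · filter_upwards [hξl, hl] with ω h h'
    rwa [h]

end BoundedFunctions

section tailInf

variable {Ω : Type*}

noncomputable def tailInf (u : ℕ → Ω → ℝ) (j : ℕ) (ω : Ω) : ℝ := ⨅ k, u (j + k) ω

variable {u : ℕ → Ω → ℝ} {K : ℝ}

theorem bddBelow_range_add_of_abs_le (hb : ∀ k ω, |u k ω| ≤ K) (j : ℕ) (ω : Ω) :
    BddBelow (range fun k => u (j + k) ω) :=
  ⟨-K, by rintro _ ⟨k, rfl⟩; exact (abs_le.1 (hb _ ω)).1⟩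

theorem tailInf_le (hb : ∀ k ω, |u k ω| ≤ K) (j : ℕ) (ω : Ω) : tailInf u j ω ≤ u j ω :=
  ciInf_le (bddBelow_range_add_of_abs_le hb j ω) 0

theorem tailInf_le_succ (hb : ∀ k ω, |u k ω| ≤ K) (j : ℕ) (ω : Ω) :
    tailInf u j ω ≤ tailInf u (j + 1) ω :=
  le_ciInf fun k => (ciInf_le (bddBelow_range_add_of_abs_le hb j ω) (k + 1)).trans_eq
    (by rw [add_assoc, add_comm 1 k])

theorem abs_tailInf_le (hb : ∀ k ω, |u k ω| ≤ K) (j : ℕ) (ω : Ω) : |tailInf u j ω| ≤ K :=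
  abs_le.2 ⟨le_ciInf fun _ => (abs_le.1 (hb _ ω)).1,
    (tailInf_le hb j ω).trans (abs_le.1 (hb j ω)).2⟩

theorem inB_tailInf [MeasurableSpace Ω] (hu : ∀ k, Measurable (u k))
    (hb : ∀ k ω, |u k ω| ≤ K) (j : ℕ) : InB (tailInf u j) :=
  ⟨Measurable.iInf fun k => hu (j + k), K, abs_tailInf_le hb j⟩

theorem tendsto_tailInf (hb : ∀ k ω, |u k ω| ≤ K) {ω : Ω} {a : ℝ}
    (h : Tendsto (fun k => u k ω) atTop (𝓝 a)) : Tendsto (fun j => tailInf u j ω) atTop (𝓝 a) :=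
  h.ciInf_tail (by simpa using bddBelow_range_add_of_abs_le hb 0 ω)

end tailInf

section Risk

variable {Ω : Type*} [MeasurableSpace Ω] (P : Measure Ω) (ρ : (Ω → ℝ) → ℝ)

def RiskAntitone : Prop :=
  ∀ Φ Ψ : Ω → ℝ, InB Φ → InB Ψ → (∀ᵐ ω ∂P, Φ ω ≤ Ψ ω) → ρ Ψ ≤ ρ Φ

def RiskConvex : Prop :=
  ∀ Φ Ψ : Ω → ℝ, InB Φ → InB Ψ → ∀ l : ℝ, 0 ≤ l → l ≤ 1 →
    ρ (l • Φ + (1 - l) • Ψ) ≤ l * ρ Φ + (1 - l) * ρ Ψ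

def RiskContinuousFromBelow : Prop :=
  ∀ (Ψn : ℕ → Ω → ℝ) (Ψ : Ω → ℝ), (∀ n, InB (Ψn n)) → InB Ψ →
    (∃ K : ℝ, ∀ n, ∀ᵐ ω ∂P, |Ψn n ω| ≤ K) →
    (∀ᵐ ω ∂P, ∀ n, Ψn n ω ≤ Ψn (n + 1) ω) →
    (∀ᵐ ω ∂P, Tendsto (fun n => Ψn n ω) atTop (𝓝 (Ψ ω))) →
    Tendsto (fun n => ρ (Ψn n)) atTop (𝓝 (ρ Ψ))

variable {P ρ}

theorem RiskAntitone.congr_ae (hmono : RiskAntitone P ρ) {Φ Ψ : Ω → ℝ} (hΦ : InB Φ) (hΨ : InB Ψ)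
    (h : Φ =ᵐ[P] Ψ) : ρ Φ = ρ Ψ :=
  le_antisymm (hmono Ψ Φ hΨ hΦ h.symm.le) (hmono Φ Ψ hΦ hΨ h.le)

theorem RiskAntitone.bddBelow_range_sub (hmono : RiskAntitone P ρ) {V : Set (Ω → ℝ)}
    (hVB : ∀ ξ ∈ V, InB ξ) {C : ℝ} (hVC : ∀ ξ ∈ V, ∀ᵐ ω ∂P, |ξ ω| ≤ C) {X : Ω → ℝ}
    (hX : InB X) : BddBelow (range fun ξ : V => ρ (X - (ξ : Ω → ℝ))) := by
  refine ⟨ρ (X + fun _ => C), ?_⟩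
  rintro _ ⟨⟨ξ, hξ⟩, rfl⟩
  refine hmono _ _ (hX.sub (hVB ξ hξ)) (hX.add (inB_const C)) ((hVC ξ hξ).mono fun ω hω => ?_)
  show X ω - ξ ω ≤ X ω + C
  linarith [neg_le_of_abs_le hω]

theorem RiskConvex.convex_setOf_sub_le (hconv : RiskConvex ρ) {V : Set (Ω → ℝ)}
    (hV : Convex ℝ V) (hVB : ∀ ξ ∈ V, InB ξ) {X : Ω → ℝ} (hX : InB X) (t : ℝ) :
    Convex ℝ {ξ ∈ V | ρ (X - ξ) ≤ t} := by
  rintro ξ ⟨hξV, hξt⟩ ζ ⟨hζV, hζt⟩ a b ha hb hab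
  refine ⟨hV hξV hζV ha hb hab, ?_⟩
  obtain rfl : b = 1 - a := by linarith
  calc ρ (X - (a • ξ + (1 - a) • ζ)) = ρ (a • (X - ξ) + (1 - a) • (X - ζ)) := by congr 1; module
    _ ≤ a * ρ (X - ξ) + (1 - a) * ρ (X - ζ) :=
      hconv _ _ (hX.sub (hVB ξ hξV)) (hX.sub (hVB ζ hζV)) a ha (by linarith)
    _ ≤ a * t + (1 - a) * t := by gcongr
    _ = t := by ring

theorem RiskContinuousFromBelow.tendsto_add_tailInf (hcb : RiskContinuousFromBelow P ρ)
    {φ Ψ : Ω → ℝ} (hφ : InB φ) (hΨ : InB Ψ) {u : ℕ → Ω → ℝ} {K : ℝ}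
    (hu : ∀ k, Measurable (u k)) (hb : ∀ k ω, |u k ω| ≤ K)
    (hlim : ∀ᵐ ω ∂P, Tendsto (fun k => u k ω) atTop (𝓝 (Ψ ω - φ ω))) :
    Tendsto (fun j => ρ (φ + tailInf u j)) atTop (𝓝 (ρ Ψ)) := by
  obtain ⟨hφm, Cφ, hCφ⟩ := hφ
  refine hcb _ Ψ (fun j => InB.add ⟨hφm, Cφ, hCφ⟩ (inB_tailInf hu hb j)) hΨ
    ⟨Cφ + K, fun j => ae_of_all _ fun ω =>
      (abs_add_le _ _).trans (add_le_add (hCφ ω) (abs_tailInf_le hb j ω))⟩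
    (ae_of_all _ fun ω j => add_le_add_right (tailInf_le_succ hb j ω) _)
    (hlim.mono fun ω h => ?_)
  simpa using (tendsto_tailInf hb h).const_add (φ ω)

theorem RiskContinuousFromBelow.tendsto_of_forall_abs_le (hcb : RiskContinuousFromBelow P ρ)
    (hmono : RiskAntitone P ρ) (hconv : RiskConvex ρ) {u : ℕ → Ω → ℝ} {Ψ : Ω → ℝ} {K : ℝ}
    (hu : ∀ k, Measurable (u k)) (hb : ∀ k ω, |u k ω| ≤ K) (hΨ : InB Ψ)
    (hlim : ∀ᵐ ω ∂P, Tendsto (fun k => u k ω) atTop (𝓝 (Ψ ω))) :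
    Tendsto (fun k => ρ (u k)) atTop (𝓝 (ρ Ψ)) := by
  set u' : ℕ → Ω → ℝ := fun k ω => -u k ω
  have hb' (k : ℕ) (ω : Ω) : |u' k ω| ≤ K := (abs_neg _).trans_le (hb k ω)
  have h_lo : Tendsto (fun j => ρ (tailInf u j)) atTop (𝓝 (ρ Ψ)) := by
    simpa using hcb.tendsto_add_tailInf (φ := 0) (inB_const 0) hΨ hu hb (by simpa using hlim)
  -- `-tailInf u' j` is the upper envelope `⨆ k, u (j + k)`; its reflection `θ j` through `Ψ`
  -- increases to `Ψ`, so continuity from below applies to it as well.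
  set θ : ℕ → Ω → ℝ := fun j => (2 : ℝ) • Ψ + tailInf u' j
  have hu' (k : ℕ) : Measurable (u' k) := (hu k).neg
  have h_θ : Tendsto (fun j => ρ (θ j)) atTop (𝓝 (ρ Ψ)) :=
    hcb.tendsto_add_tailInf (hΨ.const_smul 2) hΨ hu' hb'
      (hlim.mono fun ω h => by convert h.neg using 2; simp only [Pi.smul_apply, smul_eq_mul]; ring)
  have h_upper (j : ℕ) : ρ (u j) ≤ ρ (tailInf u j) :=
    hmono _ _ (inB_tailInf hu hb j) ⟨hu j, K, hb j⟩ (ae_of_all _ (tailInf_le hb j))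
  have h_lower (j : ℕ) : 2 * ρ Ψ - ρ (θ j) ≤ ρ (u j) := by
    have hsup : InB (-tailInf u' j) := (inB_tailInf hu' hb' j).neg
    have hsplit : Ψ = (1 / 2 : ℝ) • (-tailInf u' j) + (1 - 1 / 2 : ℝ) • θ j := by
      ext ω; simp only [θ, Pi.add_apply, Pi.smul_apply, Pi.neg_apply, smul_eq_mul]; ring
    have h_conv := hconv _ (θ j) hsup ((hΨ.const_smul 2).add (inB_tailInf hu' hb' j)) (1 / 2)
      (by norm_num) (by norm_num)
    have h_sup : ρ (-tailInf u' j) ≤ ρ (u j) := hmono _ _ ⟨hu j, K, hb j⟩ hsup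
      (ae_of_all _ fun ω => le_neg_of_le_neg (tailInf_le hb' j ω))
    rw [← hsplit] at h_conv
    linarith
  have h_lower_lim : Tendsto (fun j => 2 * ρ Ψ - ρ (θ j)) atTop (𝓝 (ρ Ψ)) := by
    simpa [two_mul] using h_θ.const_sub (2 * ρ Ψ)
  exact tendsto_of_tendsto_of_tendsto_of_le_of_le h_lower_lim h_lo h_lower h_upper

theorem RiskContinuousFromBelow.tendsto (hcb : RiskContinuousFromBelow P ρ)
    (hmono : RiskAntitone P ρ) (hconv : RiskConvex ρ) {u : ℕ → Ω → ℝ} {Ψ : Ω → ℝ}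
    (hu : ∀ k, InB (u k)) (hb : ∃ K, ∀ k, ∀ᵐ ω ∂P, |u k ω| ≤ K) (hΨ : InB Ψ)
    (hlim : ∀ᵐ ω ∂P, Tendsto (fun k => u k ω) atTop (𝓝 (Ψ ω))) :
    Tendsto (fun k => ρ (u k)) atTop (𝓝 (ρ Ψ)) := by
  obtain ⟨K, hK⟩ := hb
  choose v hvB hvK hvu using fun k => exists_inB_ae_eq (hu k).1.aemeasurable (hK k)
  have hρ (k : ℕ) : ρ (v k) = ρ (u k) := hmono.congr_ae (hvB k) (hu k) (hvu k)
  simp only [← hρ]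
  refine hcb.tendsto_of_forall_abs_le hmono hconv (fun k => (hvB k).1) hvK hΨ ?_
  filter_upwards [hlim, ae_all_iff.2 hvu] with ω hω hvω
  exact hω.congr fun k => (hvω k).symm

end Risk

theorem stmt18_general {Ω : Type*} [MeasurableSpace Ω] (P : Measure Ω) [IsProbabilityMeasure P]
    (ρ : (Ω → ℝ) → ℝ)
    (hconv : ∀ Φ Ψ : Ω → ℝ, InB Φ → InB Ψ → ∀ l : ℝ, 0 ≤ l → l ≤ 1 →
        ρ (l • Φ + (1 - l) • Ψ) ≤ l * ρ Φ + (1 - l) * ρ Ψ)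
    (hmono : ∀ Φ Ψ : Ω → ℝ, InB Φ → InB Ψ → (∀ᵐ ω ∂P, Φ ω ≤ Ψ ω) → ρ Ψ ≤ ρ Φ)
    (hcb : ∀ (Ψn : ℕ → Ω → ℝ) (Ψ : Ω → ℝ), (∀ n, InB (Ψn n)) → InB Ψ →
        (∃ K : ℝ, ∀ n, ∀ᵐ ω ∂P, |Ψn n ω| ≤ K) →
        (∀ᵐ ω ∂P, ∀ n, Ψn n ω ≤ Ψn (n + 1) ω) →
        (∀ᵐ ω ∂P, Tendsto (fun n => Ψn n ω) atTop (nhds (Ψ ω))) →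
        Tendsto (fun n => ρ (Ψn n)) atTop (nhds (ρ Ψ)))
    (V : Set (Ω → ℝ)) (hVne : V.Nonempty) (hVconv : Convex ℝ V)
    (hVB : ∀ ξ ∈ V, InB ξ)
    (C : ℝ) (hVbdd : ∀ ξ ∈ V, ∀ᵐ ω ∂P, |ξ ω| ≤ C)
    (X : Ω → ℝ) (hX : InB X) :
    BddBelow (Set.range fun ξ : V => ρ (X - (ξ : Ω → ℝ))) ∧
    ∃ ξs : Ω → ℝ, InB ξs ∧ (∀ᵐ ω ∂P, |ξs ω| ≤ C) ∧
      (∃ ξn : ℕ → Ω → ℝ, (∀ n, ξn n ∈ V) ∧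
        ∀ᵐ ω ∂P, Tendsto (fun n => ξn n ω) atTop (nhds (ξs ω))) ∧
      ρ (X - ξs) = ⨅ ξ : V, ρ (X - (ξ : Ω → ℝ)) := by
  have hbdd := RiskAntitone.bddBelow_range_sub hmono hVB hVbdd hX
  obtain ⟨t, ht_anti, ht_lim, ht_mem⟩ := exists_seq_tendsto_sInf (range_nonempty_iff_nonempty.2
    hVne.to_subtype) hbdd
  choose ξ hξ using ht_mem
  obtain ⟨η, hη, l, hηl⟩ := exists_ae_tendsto_of_mem_convexHull_tail (f := fun n => (ξ n : Ω → ℝ))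
    (fun n => (hVB _ (ξ n).2).1.aestronglyMeasurable)
    (fun n => by simpa only [Real.norm_eq_abs] using hVbdd _ (ξ n).2)
  have hηV (n : ℕ) : η n ∈ {ζ ∈ V | ρ (X - ζ) ≤ t n} := by
    refine convexHull_min ?_ (RiskConvex.convex_setOf_sub_le hconv hVconv hVB hX (t n)) (hη n)
    rintro _ ⟨k, hk, rfl⟩
    exact ⟨(ξ k).2, (hξ k).le.trans (ht_anti hk)⟩
  obtain ⟨ξs, hξsB, hξsC, hηξs⟩ := exists_inB_of_ae_tendsto (fun n => (hVB _ (hηV n).1).1)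
    (fun n => hVbdd _ (hηV n).1) hηl
  have h_inf : Tendsto (fun n => ρ (X - η n)) atTop (𝓝 (⨅ ξ : V, ρ (X - (ξ : Ω → ℝ)))) :=
    tendsto_of_tendsto_of_tendsto_of_le_of_le tendsto_const_nhds ht_lim
      (fun n => ciInf_le hbdd ⟨_, (hηV n).1⟩) (fun n => (hηV n).2)
  obtain ⟨KX, hKX⟩ := hX.2
  have h_lim : Tendsto (fun n => ρ (X - η n)) atTop (𝓝 (ρ (X - ξs))) :=
    RiskContinuousFromBelow.tendsto hcb hmono hconv (fun n => hX.sub (hVB _ (hηV n).1))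
      ⟨KX + C, fun n => (hVbdd _ (hηV n).1).mono fun ω hω => (abs_sub _ _).trans
        (add_le_add (hKX ω) hω)⟩ (hX.sub hξsB) (hηξs.mono fun ω h => tendsto_const_nhds.sub h)
  exact ⟨hbdd, ξs, hξsB, hξsC, ⟨η, fun n => (hηV n).1, hηξs⟩, tendsto_nhds_unique h_lim h_inf⟩

/-- Existence of an optimal hedge: for a convex risk measure `ρ` on bounded measurable
functions, compatible with `P` and continuous from below, and a nonempty convex set `V`
of hedging instruments uniformly bounded by `C`, the hedging infimum
`inf_{ξ ∈ V} ρ(X - ξ)` is finite and attained at some `ξ*` in the closure of `V` with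
respect to `P`-almost-sure convergence. -/
theorem stmt18 {Ω : Type*} [MeasurableSpace Ω] (P : Measure Ω) [IsProbabilityMeasure P]
    (ρ : (Ω → ℝ) → ℝ)
    (hconv : ∀ Φ Ψ : Ω → ℝ, InB Φ → InB Ψ → ∀ l : ℝ, 0 ≤ l → l ≤ 1 →
        ρ (l • Φ + (1 - l) • Ψ) ≤ l * ρ Φ + (1 - l) * ρ Ψ)
    (hmono : ∀ Φ Ψ : Ω → ℝ, InB Φ → InB Ψ → (∀ᵐ ω ∂P, Φ ω ≤ Ψ ω) → ρ Ψ ≤ ρ Φ)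
    (htrans : ∀ Φ : Ω → ℝ, InB Φ → ∀ m : ℝ, ρ (Φ + fun _ => m) = ρ Φ - m)
    (hae : ∀ Φ Ψ : Ω → ℝ, InB Φ → InB Ψ → Φ =ᵐ[P] Ψ → ρ Φ = ρ Ψ)
    (hcb : ∀ (Ψn : ℕ → Ω → ℝ) (Ψ : Ω → ℝ), (∀ n, InB (Ψn n)) → InB Ψ →
        (∃ K : ℝ, ∀ n, ∀ᵐ ω ∂P, |Ψn n ω| ≤ K) →
        (∀ᵐ ω ∂P, ∀ n, Ψn n ω ≤ Ψn (n + 1) ω) →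
        (∀ᵐ ω ∂P, Tendsto (fun n => Ψn n ω) atTop (nhds (Ψ ω))) →
        Tendsto (fun n => ρ (Ψn n)) atTop (nhds (ρ Ψ)))
    (V : Set (Ω → ℝ)) (hVne : V.Nonempty) (hVconv : Convex ℝ V)
    (hVB : ∀ ξ ∈ V, InB ξ)
    (C : ℝ) (hVbdd : ∀ ξ ∈ V, ∀ᵐ ω ∂P, |ξ ω| ≤ C)
    (X : Ω → ℝ) (hX : InB X) :
    BddBelow (Set.range fun ξ : V => ρ (X - (ξ : Ω → ℝ))) ∧
    ∃ ξs : Ω → ℝ, InB ξs ∧ (∀ᵐ ω ∂P, |ξs ω| ≤ C) ∧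
      (∃ ξn : ℕ → Ω → ℝ, (∀ n, ξn n ∈ V) ∧
        ∀ᵐ ω ∂P, Tendsto (fun n => ξn n ω) atTop (nhds (ξs ω))) ∧
      ρ (X - ξs) = ⨅ ξ : V, ρ (X - (ξ : Ω → ℝ)) :=
  stmt18_general P ρ hconv hmono hcb V hVne hVconv hVB C hVbdd X hX
end
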